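/- arXiv:2103.14467 — 8 statements merged into one kernel-verified Lean document; each statement's English description precedes it below -/
import Mathlib

section
/- Let G be a group and σ a 2-cocycle on G. Then for all x, y, z ∈ G one has σ̃(x, yz) = σ̃(x, y) · σ̃(y⁻¹xy, z), where σ̃(x,y) = σ(x,y) · conj(σ(y, y⁻¹xy)). -/
open scoped ComplexConjugate

/-!
Writing `w = y⁻¹xy`, one has `(yz)⁻¹x(yz) = z⁻¹wz` and `yw = xy`, so the identity only involves
the cocycle relation at the triples `(x, y, z)`, `(y, w, z)` and `(y, z, z⁻¹wz)`; multiplied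
together in the commutative group of values, they give exactly the claim. For unimodular
values `conj` is inversion, so `σ̃(x, y) = σ(x, y) / σ(y, y⁻¹xy)` computed in `Circle`.
-/

section CommGroup

variable {G α : Type*} [Group G] [CommGroup α]

def twistedCocycle (σ : G → G → α) (x y : G) : α :=
  σ x y / σ y (y⁻¹ * x * y)

theorem twistedCocycle_mul_right {σ : G → G → α}
    (hσ : ∀ x y z, σ x y * σ (x * y) z = σ x (y * z) * σ y z) (x y z : G) :
    twistedCocycle σ x (y * z) = twistedCocycle σ x y * twistedCocycle σ (y⁻¹ * x * y) z := by
  generalize hw : y⁻¹ * x * y = w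
  have hconj : (y * z)⁻¹ * x * (y * z) = z⁻¹ * w * z := by rw [← hw]; group
  have h₂ : σ (x * y) z / σ y (w * z) = σ w z / σ y w := by
    refine div_eq_div_iff_mul_eq_mul.2 ?_
    rw [mul_comm, ← (by rw [← hw]; group : y * w = x * y), hσ, mul_comm]
  have h₃ : σ y z * σ (y * z) (z⁻¹ * w * z) = σ z (z⁻¹ * w * z) * σ y (w * z) := by
    rw [hσ, (by group : z * (z⁻¹ * w * z) = w * z), mul_comm]
  rw [twistedCocycle, twistedCocycle, twistedCocycle, hconj, hw]
  calc σ x (y * z) / σ (y * z) (z⁻¹ * w * z)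
      = σ x (y * z) * σ y z / (σ y z * σ (y * z) (z⁻¹ * w * z)) := by
        rw [mul_comm (σ y z), mul_div_mul_right_eq_div]
    _ = σ x y / σ z (z⁻¹ * w * z) * (σ (x * y) z / σ y (w * z)) := by
        rw [← hσ, h₃, mul_div_mul_comm]
    _ = σ x y / σ y w * (σ w z / σ z (z⁻¹ * w * z)) := by
        rw [h₂, div_mul_div_comm, div_mul_div_comm, mul_comm (σ z _)]

end CommGroup

theorem twisted_cocycle_mul_general {G : Type*} [Group G] (σ : G → G → ℂ)
    (hσ_unit : ∀ x y, ‖σ x y‖ = 1)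
    (hσ_cocycle : ∀ x y z, σ x y * σ (x * y) z = σ x (y * z) * σ y z)
    (σt : G → G → ℂ)
    (hσt : ∀ x y, σt x y = σ x y * conj (σ y (y⁻¹ * x * y))) :
    ∀ x y z : G, σt x (y * z) = σt x y * σt (y⁻¹ * x * y) z := by
  let s : G → G → Circle := fun x y ↦ ⟨σ x y, mem_sphere_zero_iff_norm.2 (hσ_unit x y)⟩
  have hs : ∀ x y z, s x y * s (x * y) z = s x (y * z) * s y z := fun x y z ↦
    Circle.ext (hσ_cocycle x y z)
  have hσt_circle : ∀ x y, σt x y = twistedCocycle s x y := fun x y ↦ by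
    rw [hσt, twistedCocycle, div_eq_mul_inv, Circle.coe_mul, Circle.coe_inv_eq_conj]
  intro x y z
  simp only [hσt_circle, twistedCocycle_mul_right hs, Circle.coe_mul]

/-- For a 2-cocycle `σ` on a group `G`, the associated function
`σ̃(x,y) = σ(x,y) ⬝ conj (σ(y, y⁻¹xy))` satisfies
`σ̃(x, yz) = σ̃(x, y) ⬝ σ̃(y⁻¹xy, z)` for all `x, y, z ∈ G`. -/
theorem twisted_cocycle_mul {G : Type*} [Group G] (σ : G → G → ℂ)
    (hσ_unit : ∀ x y, ‖σ x y‖ = 1)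
    (hσ_cocycle : ∀ x y z, σ x y * σ (x * y) z = σ x (y * z) * σ y z)
    (hσ_one : σ 1 1 = 1)
    (σt : G → G → ℂ)
    (hσt : ∀ x y, σt x y = σ x y * conj (σ y (y⁻¹ * x * y))) :
    ∀ x y z : G, σt x (y * z) = σt x y * σt (y⁻¹ * x * y) z :=
  twisted_cocycle_mul_general σ hσ_unit hσ_cocycle σt hσt
end

section
/- Let G be a group and σ a 2-cocycle on G. Then for all x, y ∈ G one has σ̃(x, y⁻¹) = conj(σ̃(yxy⁻¹, y)), where σ̃(x,y) = σ(x,y) · conj(σ(y, y⁻¹xy)). -/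
open scoped ComplexConjugate

/-- For a 2-cocycle `σ` on a group `G`, the associated function
`σ̃(x,y) = σ(x,y) ⬝ conj (σ(y, y⁻¹xy))` satisfies
`σ̃(x, y⁻¹) = conj (σ̃(yxy⁻¹, y))` for all `x, y ∈ G`. -/
theorem twisted_cocycle_inv {G : Type*} [Group G] (σ : G → G → ℂ)
    (hσ_unit : ∀ x y, ‖σ x y‖ = 1)
    (hσ_cocycle : ∀ x y z, σ x y * σ (x * y) z = σ x (y * z) * σ y z)
    (hσ_one : σ 1 1 = 1)
    (σt : G → G → ℂ)
    (hσt : ∀ x y, σt x y = σ x y * conj (σ y (y⁻¹ * x * y))) :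
    ∀ x y : G, σt x y⁻¹ = conj (σt (y * x * y⁻¹) y) := by
  have hne : ∀ a b, σ a b ≠ 0 := by
    intro a b h
    have := hσ_unit a b
    rw [h] at this
    simp at this
  have hconj : ∀ a b, conj (σ a b) = (σ a b)⁻¹ := by
    intro a b
    rw [Complex.inv_eq_conj]
    simpa using hσ_unit a b
  have honeR : ∀ a : G, σ a 1 = 1 := by
    intro a
    have h := hσ_cocycle a 1 1
    simp [hσ_one] at h
    exact mul_left_cancel₀ (hne a 1) (h.trans (mul_one _).symm)
  have honeL : ∀ a : G, σ 1 a = 1 := by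
    intro a
    have h := hσ_cocycle 1 1 a
    simp [hσ_one] at h
    exact (mul_left_cancel₀ (hne 1 a) ((mul_one _).trans h)).symm
  intro x y
  have hA := hσ_cocycle y⁻¹ (y * x * y⁻¹) y
  have hB := hσ_cocycle x y⁻¹ y
  have hC := hσ_cocycle y⁻¹ y x
  have e1 : y⁻¹ * (y * x * y⁻¹) = x * y⁻¹ := by group
  have e2 : y * x * y⁻¹ * y = y * x := by group
  rw [e1, e2] at hA
  rw [inv_mul_cancel, honeR, one_mul] at hB
  rw [inv_mul_cancel, honeL, mul_one] at hC
  have e3 : y⁻¹⁻¹ * x * y⁻¹ = y * x * y⁻¹ := by group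
  have e4 : y⁻¹ * (y * x * y⁻¹) * y = x := by group
  rw [hσt, hσt, map_mul, Complex.conj_conj, e3, e4, hconj, hconj]
  set a := σ x y⁻¹ with ha
  set b := σ y⁻¹ (y * x * y⁻¹) with hb
  set c := σ (y * x * y⁻¹) y with hc
  set d := σ y x with hd
  set p := σ (x * y⁻¹) y with hp
  set q := σ y⁻¹ (y * x) with hq
  set r := σ y⁻¹ y with hr
  -- hA : b * p = q * c, hB : a * p = r, hC : r = q * d
  have hpne : p ≠ 0 := hne _ _
  have hqne : q ≠ 0 := hne _ _
  have hbne : b ≠ 0 := hne _ _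
  have hcne : c ≠ 0 := hne _ _
  have key : (a * c) * (p * q) = (b * d) * (p * q) := by
    linear_combination c * q * hB - d * q * hA + c * q * hC
  have key2 : a * c = b * d := mul_right_cancel₀ (mul_ne_zero hpne hqne) key
  field_simp
  linear_combination key2
end

section
/- Let G be a group and σ a 2-cocycle on G. If x ∈ G is σ-regular and y, y' ∈ G satisfy y⁻¹xy = y'⁻¹xy', then σ̃(x, y) = σ̃(x, y'), where σ̃(x,y) = σ(x,y) · conj(σ(y, y⁻¹xy)). -/
open scoped ComplexConjugate

/-!
Put `g = y' y⁻¹`, so that `y' = g y` and `g` commutes with `x`. Applying the cocycle identity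
to the triples `(x, g, y)`, `(g, x, y)` and `(g, y, y⁻¹ x y)`, and swapping `σ(x, g)` for
`σ(g, x)` by regularity, gives `σ(x, g y) σ(y, y⁻¹ x y) = σ(x, y) σ(g y, y⁻¹ x y)`. Since `σ` is
unimodular, `conj` is inversion and this is exactly `σ̃(x, y) = σ̃(x, g y)`.
-/

theorem commute_mul_inv_of_conj_eq {G : Type*} [Group G] {x y y' : G}
    (h : y⁻¹ * x * y = y'⁻¹ * x * y') : Commute x (y' * y⁻¹) := by
  calc x * (y' * y⁻¹) = y' * (y'⁻¹ * x * y') * y⁻¹ := by group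
    _ = y' * (y⁻¹ * x * y) * y⁻¹ := by rw [h]
    _ = y' * y⁻¹ * x := by group

theorem cocycle_mul_left_of_commute {G M : Type*} [Group G] [CommMonoidWithZero M]
    [IsRightCancelMulZero M]
    {σ : G → G → M} (hσ : ∀ a b c, σ a b * σ (a * b) c = σ a (b * c) * σ b c)
    {x g : G} (hxg : Commute x g) (hreg : σ x g = σ g x) {y : G} (hgy : σ g y ≠ 0) :
    σ x (g * y) * σ y (y⁻¹ * x * y) = σ x y * σ (g * y) (y⁻¹ * x * y) := by
  have hyt : y * (y⁻¹ * x * y) = x * y := by group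
  refine mul_right_cancel₀ hgy ?_
  calc σ x (g * y) * σ y (y⁻¹ * x * y) * σ g y
      = σ x (g * y) * σ g y * σ y (y⁻¹ * x * y) := mul_right_comm _ _ _
    _ = σ g x * σ (g * x) y * σ y (y⁻¹ * x * y) := by rw [← hσ, hreg, hxg.eq]
    _ = σ x y * (σ g (y * (y⁻¹ * x * y)) * σ y (y⁻¹ * x * y)) := by rw [hσ, hyt]; ac_rfl
    _ = σ x y * σ (g * y) (y⁻¹ * x * y) * σ g y := by rw [← hσ]; ac_rfl

theorem twisted_cocycle_regular_general {G : Type*} [Group G] (σ : G → G → ℂ)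
    (hσ_unit : ∀ x y, ‖σ x y‖ = 1)
    (hσ_cocycle : ∀ x y z, σ x y * σ (x * y) z = σ x (y * z) * σ y z)
    (σt : G → G → ℂ)
    (hσt : ∀ x y, σt x y = σ x y * conj (σ y (y⁻¹ * x * y)))
    (x : G) (hx_reg : ∀ y : G, x * y = y * x → σ x y = σ y x)
    (y y' : G) (h : y⁻¹ * x * y = y'⁻¹ * x * y') :
    σt x y = σt x y' := by
  have hne : ∀ a b, σ a b ≠ 0 := fun a b =>
    norm_ne_zero_iff.mp (by rw [hσ_unit]; exact one_ne_zero)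
  have hcomm : Commute x (y' * y⁻¹) := commute_mul_inv_of_conj_eq h
  have hy' : y' * y⁻¹ * y = y' := inv_mul_cancel_right y' y
  have key := cocycle_mul_left_of_commute hσ_cocycle hcomm (hx_reg _ hcomm) (hne _ y)
  rw [hy'] at key
  rw [hσt, hσt, ← h, ← Complex.inv_eq_conj (hσ_unit _ _), ← Complex.inv_eq_conj (hσ_unit _ _),
    ← div_eq_mul_inv, ← div_eq_mul_inv, div_eq_div_iff (hne _ _) (hne _ _)]
  exact key.symm

/-- For a 2-cocycle `σ` on a group `G`, if `x` is `σ`-regular and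
`y⁻¹xy = y'⁻¹xy'`, then `σ̃(x, y) = σ̃(x, y')`, where
`σ̃(x,y) = σ(x,y) ⬝ conj (σ(y, y⁻¹xy))`. -/
theorem twisted_cocycle_regular {G : Type*} [Group G] (σ : G → G → ℂ)
    (hσ_unit : ∀ x y, ‖σ x y‖ = 1)
    (hσ_cocycle : ∀ x y z, σ x y * σ (x * y) z = σ x (y * z) * σ y z)
    (hσ_one : σ 1 1 = 1)
    (σt : G → G → ℂ)
    (hσt : ∀ x y, σt x y = σ x y * conj (σ y (y⁻¹ * x * y)))
    (x : G) (hx_reg : ∀ y : G, x * y = y * x → σ x y = σ y x)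
    (y y' : G) (h : y⁻¹ * x * y = y'⁻¹ * x * y') :
    σt x y = σt x y' :=
  twisted_cocycle_regular_general σ hσ_unit hσ_cocycle σt hσt x hx_reg y y' h
end

section
/- Let Γ be a discrete group with 2-cocycle σ, let M = vN(Γ,σ) be the σ-twisted group von Neumann algebra on ℓ²(Γ), and let Tr : M → M be a linear map whose values lie in the center Z(M) = M ∩ M', satisfying Tr(ab) = Tr(ba) for all a,b ∈ M and Tr(z) = z for all z ∈ Z(M). If γ ∈ Γ has a finite σ-regular conjugacy class C_γ = {β₁⁻¹γβ₁, …, β_k⁻¹γβ_k} (with the listed elements pairwise distinct, β_j ∈ Γ), then Tr(λ_σ(γ)) = |C_γ|⁻¹ · Σ_{j=1}^{k} σ(γ, β_j) · conj(σ(β_j, β_j⁻¹γβ_j)) · λ_σ(β_j⁻¹γβ_j). -/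
open scoped ComplexConjugate

/-! Conjugating `λ(γ)` by the unit `λ(b)` gives `λ(b)⁻¹ λ(γ) λ(b) = c(b) • λ(b⁻¹γb)`, and by
σ-regularity this conjugate depends only on `b⁻¹γb`. Hence conjugation by `λ(τ)` permutes the
terms of `z := ∑ⱼ λ(βⱼ)⁻¹ λ(γ) λ(βⱼ)`, so `z` commutes with every `λ(τ)` and is central in the
double commutant, whence `Tr z = z`. On the other hand traciality gives
`Tr (λ(b)⁻¹ λ(γ) λ(b)) = Tr λ(γ)` for each term, so `Tr z = k • Tr λ(γ)`. -/

lemma cocycle_one_left {Γ G : Type*} [Group Γ] [Group G] {σ : Γ → Γ → G}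
    (hσ : ∀ x y z, σ x y * σ (x * y) z = σ x (y * z) * σ y z) (h11 : σ 1 1 = 1) (x : Γ) :
    σ 1 x = 1 := by
  have h := hσ 1 1 x
  simp only [one_mul] at h
  rw [← h11, mul_right_cancel h]

lemma sum_comp_mul_right_eq_of_enum_conj {Γ M : Type*} [Group Γ] [AddCommMonoid M] {γ : Γ}
    {k : ℕ} {β : Fin k → Γ} (hinj : Function.Injective fun j : Fin k => (β j)⁻¹ * γ * β j)
    (hcover : ∀ δ : Γ, (∃ τ : Γ, τ⁻¹ * γ * τ = δ) → ∃ j : Fin k, (β j)⁻¹ * γ * β j = δ)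
    {f : Γ → M} (hf : ∀ b b', b⁻¹ * γ * b = b'⁻¹ * γ * b' → f b = f b') (τ : Γ) :
    ∑ j, f (β j * τ) = ∑ j, f (β j) := by
  choose π hπ using fun j => hcover _ ⟨β j * τ, rfl⟩
  have hπ_inj : Function.Injective π := fun i j hij => hinj <| by
    have := (hπ i).symm.trans (hij ▸ hπ j)
    simpa [mul_assoc] using congrArg (fun x => τ * x * τ⁻¹) this
  exact Fintype.sum_bijective π hπ_inj.bijective_of_finite _ _ fun j => hf _ _ (hπ j).symm

lemma Set.units_inv_mem_centralizer {M : Type*} [Monoid M] {S : Set M} {u : Mˣ}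
    (hu : (u : M) ∈ S.centralizer) : ((u⁻¹ : Mˣ) : M) ∈ S.centralizer :=
  fun m hm => Commute.units_inv_right (hu m hm)

section ProjectiveRepresentation

open ConjAct

lemma ConjAct.units_smul_eq_self_of_commute {M : Type*} [Monoid M] {u : Mˣ} {x : M}
    (h : Commute (u : M) x) : toConjAct u • x = x := by
  rw [units_smul_def, ofConjAct_toConjAct, h.eq, Units.mul_inv_cancel_right]

lemma ConjAct.toConjAct_smul_units_smul {K A : Type*} [CommSemiring K] [Semiring A] [Algebra K A]
    (c : Kˣ) (u : Aˣ) (x : A) : toConjAct (c • u) • x = toConjAct u • x := by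
  simp only [units_smul_def, ofConjAct_toConjAct, Units.smul_inv, Units.val_smul,
    smul_mul_assoc, mul_smul_comm, smul_smul, inv_mul_cancel, one_smul]

variable {Γ K A : Type*} [Group Γ] [CommSemiring K] [Semiring A] [Algebra K A]

structure IsProjectiveRepresentation (σ : Γ → Γ → Kˣ) (lam : Γ → A) : Prop where
  map_one : lam 1 = 1
  map_mul : ∀ a b, lam a * lam b = σ a b • lam (a * b)

namespace IsProjectiveRepresentation

variable {σ : Γ → Γ → Kˣ} {lam : Γ → A}

lemma isUnit (hρ : IsProjectiveRepresentation σ lam) (b : Γ) : IsUnit (lam b) := by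
  have hr : lam b * ((σ b b⁻¹)⁻¹ • lam b⁻¹) = 1 := by
    rw [mul_smul_comm, hρ.map_mul, mul_inv_cancel, hρ.map_one, inv_smul_smul]
  have hl : ((σ b⁻¹ b)⁻¹ • lam b⁻¹) * lam b = 1 := by
    rw [smul_mul_assoc, hρ.map_mul, inv_mul_cancel, hρ.map_one, inv_smul_smul]
  exact ⟨⟨lam b, _, hr, left_inv_eq_right_inv hl hr ▸ hl⟩, rfl⟩

noncomputable def toUnit (hρ : IsProjectiveRepresentation σ lam) (b : Γ) : Aˣ :=
  (hρ.isUnit b).unit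

@[simp]
lemma val_toUnit (hρ : IsProjectiveRepresentation σ lam) (b : Γ) : (hρ.toUnit b : A) = lam b :=
  rfl

lemma toUnit_mul (hρ : IsProjectiveRepresentation σ lam) (a b : Γ) :
    hρ.toUnit (a * b) = (σ a b)⁻¹ • (hρ.toUnit a * hρ.toUnit b) := by
  ext
  simp only [val_toUnit, Units.val_smul, Units.val_mul, hρ.map_mul, inv_smul_smul]

lemma conj_toUnit_mul (hρ : IsProjectiveRepresentation σ lam) (a b : Γ) (x : A) :
    toConjAct (hρ.toUnit (a * b))⁻¹ • x =
      toConjAct (hρ.toUnit b)⁻¹ • toConjAct (hρ.toUnit a)⁻¹ • x := by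
  rw [hρ.toUnit_mul, Units.smul_inv, ConjAct.toConjAct_smul_units_smul, mul_inv_rev,
    ConjAct.toConjAct_mul, mul_smul]

lemma conj_toUnit (hρ : IsProjectiveRepresentation σ lam) (γ b : Γ) :
    toConjAct (hρ.toUnit b)⁻¹ • lam γ =
      (σ γ b * (σ b (b⁻¹ * γ * b))⁻¹) • lam (b⁻¹ * γ * b) := by
  have h : lam γ * lam b = (σ γ b * (σ b (b⁻¹ * γ * b))⁻¹) • (lam b * lam (b⁻¹ * γ * b)) := by
    rw [hρ.map_mul, hρ.map_mul, mul_smul, inv_smul_smul]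
    group
  rw [ConjAct.units_smul_def, ConjAct.ofConjAct_toConjAct, inv_inv, val_toUnit, mul_assoc, h,
    mul_smul_comm, ← mul_assoc, ← val_toUnit hρ b, Units.inv_mul, one_mul]

lemma commute_of_commute (hρ : IsProjectiveRepresentation σ lam) {γ w : Γ} (hγw : γ * w = w * γ)
    (hσ : σ γ w = σ w γ) : Commute (lam γ) (lam w) := by
  rw [Commute, SemiconjBy, hρ.map_mul, hρ.map_mul, hσ, hγw]

lemma conj_toUnit_eq_of_conj_eq (hρ : IsProjectiveRepresentation σ lam) {γ : Γ}
    (hreg : ∀ γ' : Γ, γ * γ' = γ' * γ → σ γ γ' = σ γ' γ) {b b' : Γ}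
    (h : b⁻¹ * γ * b = b'⁻¹ * γ * b') :
    toConjAct (hρ.toUnit b)⁻¹ • lam γ = toConjAct (hρ.toUnit b')⁻¹ • lam γ := by
  have hγw : γ * (b * b'⁻¹) = b * b'⁻¹ * γ := by
    simpa [mul_assoc] using congrArg (fun x => b * x * b'⁻¹) h
  have hfix : toConjAct (hρ.toUnit (b * b'⁻¹))⁻¹ • lam γ = lam γ :=
    ConjAct.units_smul_eq_self_of_commute
      ((hρ.commute_of_commute hγw (hreg _ hγw)).units_inv_right.symm)
  conv_rhs => rw [← hfix, ← hρ.conj_toUnit_mul, inv_mul_cancel_right]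

lemma commute_sum_conj_toUnit (hρ : IsProjectiveRepresentation σ lam) {γ : Γ}
    (hreg : ∀ γ' : Γ, γ * γ' = γ' * γ → σ γ γ' = σ γ' γ) {k : ℕ} {β : Fin k → Γ}
    (hinj : Function.Injective fun j : Fin k => (β j)⁻¹ * γ * β j)
    (hcover : ∀ δ : Γ, (∃ τ : Γ, τ⁻¹ * γ * τ = δ) → ∃ j : Fin k, (β j)⁻¹ * γ * β j = δ)
    (τ : Γ) : Commute (lam τ) (∑ j, toConjAct (hρ.toUnit (β j))⁻¹ • lam γ) := by
  set z := ∑ j, toConjAct (hρ.toUnit (β j))⁻¹ • lam γ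
  have hz : toConjAct (hρ.toUnit τ)⁻¹ • z = z := by
    have hinv := sum_comp_mul_right_eq_of_enum_conj hinj hcover
      (fun _ _ => hρ.conj_toUnit_eq_of_conj_eq hreg) τ
    simp only [hρ.conj_toUnit_mul, ConjAct.units_smul_def, ← Finset.sum_mul,
      ← Finset.mul_sum] at hinv
    rwa [ConjAct.units_smul_def]
  rw [ConjAct.units_smul_def, ConjAct.ofConjAct_toConjAct, inv_inv, val_toUnit] at hz
  calc lam τ * z = lam τ * (↑(hρ.toUnit τ)⁻¹ * z * lam τ) := by rw [hz]
    _ = z * lam τ := by rw [← mul_assoc, ← mul_assoc, ← val_toUnit hρ τ, Units.mul_inv, one_mul]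

theorem nsmul_trace_eq_sum_conj_toUnit (hρ : IsProjectiveRepresentation σ lam) {M : Set A}
    (hM : M = (Set.range lam).centralizer.centralizer) (Tr : A →ₗ[K] A)
    (hTr_trace : ∀ a ∈ M, ∀ b ∈ M, Tr (a * b) = Tr (b * a))
    (hTr_id : ∀ z ∈ M, (∀ b ∈ M, z * b = b * z) → Tr z = z) {γ : Γ}
    (hreg : ∀ γ' : Γ, γ * γ' = γ' * γ → σ γ γ' = σ γ' γ) {k : ℕ} {β : Fin k → Γ}
    (hinj : Function.Injective fun j : Fin k => (β j)⁻¹ * γ * β j)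
    (hcover : ∀ δ : Γ, (∃ τ : Γ, τ⁻¹ * γ * τ = δ) → ∃ j : Fin k, (β j)⁻¹ * γ * β j = δ) :
    k • Tr (lam γ) = ∑ j, toConjAct (hρ.toUnit (β j))⁻¹ • lam γ := by
  obtain rfl : M = Subalgebra.centralizer K (Set.range lam).centralizer := by
    rw [hM, Subalgebra.coe_centralizer]
  have hlam_mem (b : Γ) : lam b ∈ Subalgebra.centralizer K (Set.range lam).centralizer :=
    Set.subset_centralizer_centralizer ⟨b, rfl⟩
  have hconj_mem (b : Γ) : toConjAct (hρ.toUnit b)⁻¹ • lam γ ∈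
      Subalgebra.centralizer K (Set.range lam).centralizer := by
    rw [hρ.conj_toUnit, Units.smul_def]
    exact Subalgebra.smul_mem _ (hlam_mem _) _
  have htrace_conj (b : Γ) : Tr (lam γ) = Tr (toConjAct (hρ.toUnit b)⁻¹ • lam γ) := by
    have hinv_mem : (↑(hρ.toUnit b)⁻¹ : A) ∈
        Subalgebra.centralizer K (Set.range lam).centralizer :=
      Set.units_inv_mem_centralizer (u := hρ.toUnit b) (hlam_mem b)
    rw [ConjAct.units_smul_def, ConjAct.ofConjAct_toConjAct, inv_inv, val_toUnit, mul_assoc,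
      hTr_trace _ hinv_mem _ (mul_mem (hlam_mem γ) (hlam_mem b)), mul_assoc,
      ← val_toUnit hρ b, Units.mul_inv, mul_one]
  calc k • Tr (lam γ) = Tr (∑ j, toConjAct (hρ.toUnit (β j))⁻¹ • lam γ) := by
        simp only [map_sum, ← htrace_conj, Finset.sum_const, Finset.card_univ, Fintype.card_fin]
    _ = _ := hTr_id _ (sum_mem fun j _ => hconj_mem (β j)) fun b hb =>
        hb _ fun _ ⟨τ, hτ⟩ => hτ ▸ hρ.commute_sum_conj_toUnit hreg hinj hcover τ

end IsProjectiveRepresentation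

end ProjectiveRepresentation

lemma isProjectiveRepresentation_of_apply {Γ 𝕜 : Type*} [Group Γ] [NormedField 𝕜]
    {p : ENNReal} [Fact (1 ≤ p)] {σ : Γ → Γ → 𝕜ˣ}
    (hσ_cocycle : ∀ x y z, σ x y * σ (x * y) z = σ x (y * z) * σ y z) (hσ_one : σ 1 1 = 1)
    {lam : Γ → (lp (fun _ : Γ => 𝕜) p →L[𝕜] lp (fun _ : Γ => 𝕜) p)}
    (hlam : ∀ (γ : Γ) (f : lp (fun _ : Γ => 𝕜) p) (γ' : Γ),
      (lam γ f) γ' = σ γ (γ⁻¹ * γ') * f (γ⁻¹ * γ')) :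
    IsProjectiveRepresentation σ lam where
  map_one := by
    ext f x
    simp [hlam, cocycle_one_left hσ_cocycle hσ_one]
  map_mul a b := by
    ext f x
    have h := congrArg Units.val (hσ_cocycle a b (b⁻¹ * (a⁻¹ * x)))
    simp only [Units.val_mul, mul_inv_cancel_left] at h
    simp only [mul_apply_eq_comp, hlam, Units.smul_def, smul_apply,
      lp.coeFn_smul, Pi.smul_apply, smul_eq_mul, mul_inv_rev, mul_assoc]
    linear_combination f (b⁻¹ * (a⁻¹ * x)) * h.symm

theorem centerValuedTrace_twisted_leftRegular_general {Γ : Type*} [Group Γ]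
    (σ : Γ → Γ → ℂ)
    (hσ_unit : ∀ x y, ‖σ x y‖ = 1)
    (hσ_cocycle : ∀ x y z, σ x y * σ (x * y) z = σ x (y * z) * σ y z)
    (hσ_one : σ 1 1 = 1)
    -- the σ-projective left regular representation on ℓ²(Γ)
    (lam : Γ → (lp (fun _ : Γ => ℂ) 2 →L[ℂ] lp (fun _ : Γ => ℂ) 2))
    (hlam : ∀ (γ : Γ) (f : lp (fun _ : Γ => ℂ) 2) (γ' : Γ),
      (lam γ f) γ' = σ γ (γ⁻¹ * γ') * f (γ⁻¹ * γ'))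
    -- M = vN(Γ,σ), the double commutant of {λ_σ(γ)}
    (M : Set (lp (fun _ : Γ => ℂ) 2 →L[ℂ] lp (fun _ : Γ => ℂ) 2))
    (hM : M = {a | ∀ b, (∀ γ : Γ, b * lam γ = lam γ * b) → a * b = b * a})
    -- a linear map with values in the center Z(M) = M ∩ M', tracial, identity on Z(M)
    (Tr : (lp (fun _ : Γ => ℂ) 2 →L[ℂ] lp (fun _ : Γ => ℂ) 2) →ₗ[ℂ]
      (lp (fun _ : Γ => ℂ) 2 →L[ℂ] lp (fun _ : Γ => ℂ) 2))
    (hTr_trace : ∀ a ∈ M, ∀ b ∈ M, Tr (a * b) = Tr (b * a))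
    (hTr_id : ∀ z ∈ M, (∀ b ∈ M, z * b = b * z) → Tr z = z)
    -- γ has a σ-regular conjugacy class, listed without repetition as β_j⁻¹ γ β_j, j = 1,…,k
    (γ : Γ)
    (hreg : ∀ γ' : Γ, γ * γ' = γ' * γ → σ γ γ' = σ γ' γ)
    (k : ℕ) (β : Fin k → Γ)
    (hinj : Function.Injective fun j : Fin k => (β j)⁻¹ * γ * β j)
    (hcover : ∀ δ : Γ, (∃ τ : Γ, τ⁻¹ * γ * τ = δ) → ∃ j : Fin k, (β j)⁻¹ * γ * β j = δ) :
    Tr (lam γ) = (k : ℂ)⁻¹ •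
      ∑ j : Fin k, (σ γ (β j) * conj (σ (β j) ((β j)⁻¹ * γ * β j))) •
        lam ((β j)⁻¹ * γ * β j) := by
  let σu x y : ℂˣ :=
    Units.mk0 (σ x y) (norm_ne_zero_iff.mp (by rw [hσ_unit]; exact one_ne_zero))
  have hρ : IsProjectiveRepresentation σu lam :=
    isProjectiveRepresentation_of_apply (fun x y z => Units.ext (hσ_cocycle x y z))
      (Units.ext hσ_one) hlam
  have hM' : M = (Set.range lam).centralizer.centralizer := by
    simp only [hM, Set.centralizer, Set.forall_mem_range, Set.mem_ofPred_eq, eq_comm]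
  have hk : (k : ℂ) ≠ 0 := by
    obtain ⟨j, -⟩ := hcover γ ⟨1, by group⟩
    exact Nat.cast_ne_zero.mpr (Fin.pos j).ne'
  rw [eq_inv_smul_iff₀ hk, Nat.cast_smul_eq_nsmul, hρ.nsmul_trace_eq_sum_conj_toUnit hM' Tr
    hTr_trace hTr_id (fun γ' h => Units.ext (hreg γ' h)) hinj hcover]
  refine Finset.sum_congr rfl fun j _ => ?_
  rw [hρ.conj_toUnit, Units.smul_def, Units.val_mul, Units.val_inv_eq_inv_val, Units.val_mk0,
    Units.val_mk0, Complex.inv_eq_conj (hσ_unit _ _)]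

/-- the value of a center-valued trace on `λ_σ(γ)` for `γ` with a finite
`σ`-regular conjugacy class `{β₁⁻¹γβ₁, …, β_k⁻¹γβ_k}`. -/
theorem centerValuedTrace_twisted_leftRegular {Γ : Type*} [Group Γ]
    (σ : Γ → Γ → ℂ)
    (hσ_unit : ∀ x y, ‖σ x y‖ = 1)
    (hσ_cocycle : ∀ x y z, σ x y * σ (x * y) z = σ x (y * z) * σ y z)
    (hσ_one : σ 1 1 = 1)
    -- the σ-projective left regular representation on ℓ²(Γ)
    (lam : Γ → (lp (fun _ : Γ => ℂ) 2 →L[ℂ] lp (fun _ : Γ => ℂ) 2))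
    (hlam : ∀ (γ : Γ) (f : lp (fun _ : Γ => ℂ) 2) (γ' : Γ),
      (lam γ f) γ' = σ γ (γ⁻¹ * γ') * f (γ⁻¹ * γ'))
    -- M = vN(Γ,σ), the double commutant of {λ_σ(γ)}
    (M : Set (lp (fun _ : Γ => ℂ) 2 →L[ℂ] lp (fun _ : Γ => ℂ) 2))
    (hM : M = {a | ∀ b, (∀ γ : Γ, b * lam γ = lam γ * b) → a * b = b * a})
    -- a linear map with values in the center Z(M) = M ∩ M', tracial, identity on Z(M)
    (Tr : (lp (fun _ : Γ => ℂ) 2 →L[ℂ] lp (fun _ : Γ => ℂ) 2) →ₗ[ℂ]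
      (lp (fun _ : Γ => ℂ) 2 →L[ℂ] lp (fun _ : Γ => ℂ) 2))
    (hTr_center : ∀ a ∈ M, Tr a ∈ M ∧ ∀ b ∈ M, Tr a * b = b * Tr a)
    (hTr_trace : ∀ a ∈ M, ∀ b ∈ M, Tr (a * b) = Tr (b * a))
    (hTr_id : ∀ z ∈ M, (∀ b ∈ M, z * b = b * z) → Tr z = z)
    -- γ has a σ-regular conjugacy class, listed without repetition as β_j⁻¹ γ β_j, j = 1,…,k
    (γ : Γ)
    (hreg : ∀ γ' : Γ, γ * γ' = γ' * γ → σ γ γ' = σ γ' γ)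
    (k : ℕ) (β : Fin k → Γ)
    (hinj : Function.Injective fun j : Fin k => (β j)⁻¹ * γ * β j)
    (hcover : ∀ δ : Γ, (∃ τ : Γ, τ⁻¹ * γ * τ = δ) → ∃ j : Fin k, (β j)⁻¹ * γ * β j = δ) :
    Tr (lam γ) = (k : ℂ)⁻¹ •
      ∑ j : Fin k, (σ γ (β j) * conj (σ (β j) ((β j)⁻¹ * γ * β j))) •
        lam ((β j)⁻¹ * γ * β j) :=
  centerValuedTrace_twisted_leftRegular_general σ hσ_unit hσ_cocycle hσ_one lam hlam M hM Tr
    hTr_trace hTr_id γ hreg k β hinj hcover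
end

section
/- Let Γ be a discrete group with 2-cocycle σ, let M = vN(Γ,σ) be the σ-twisted group von Neumann algebra on ℓ²(Γ), and let Tr : M → M be a linear map whose values lie in the center Z(M) = M ∩ M' and which satisfies Tr(ab) = Tr(ba) for all a,b ∈ M. If γ ∈ Γ is not σ-regular, then Tr(λ_σ(γ)) = 0. -/
open scoped ComplexConjugate

/-- a center-valued tracial linear map on `vN(Γ,σ)` vanishes on `λ_σ(γ)`
whenever `γ` is not `σ`-regular. -/
theorem centerValuedTrace_eq_zero_of_not_regular {Γ : Type*} [Group Γ]
    (σ : Γ → Γ → ℂ)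
    (hσ_unit : ∀ x y, ‖σ x y‖ = 1)
    (hσ_cocycle : ∀ x y z, σ x y * σ (x * y) z = σ x (y * z) * σ y z)
    (hσ_one : σ 1 1 = 1)
    -- the σ-projective left regular representation on ℓ²(Γ)
    (lam : Γ → (lp (fun _ : Γ => ℂ) 2 →L[ℂ] lp (fun _ : Γ => ℂ) 2))
    (hlam : ∀ (γ : Γ) (f : lp (fun _ : Γ => ℂ) 2) (γ' : Γ),
      (lam γ f) γ' = σ γ (γ⁻¹ * γ') * f (γ⁻¹ * γ'))
    -- M = vN(Γ,σ), the double commutant of {λ_σ(γ)}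
    (M : Set (lp (fun _ : Γ => ℂ) 2 →L[ℂ] lp (fun _ : Γ => ℂ) 2))
    (hM : M = {a | ∀ b, (∀ γ : Γ, b * lam γ = lam γ * b) → a * b = b * a})
    -- a linear map with values in the center Z(M) = M ∩ M' satisfying the trace property
    (Tr : (lp (fun _ : Γ => ℂ) 2 →L[ℂ] lp (fun _ : Γ => ℂ) 2) →ₗ[ℂ]
      (lp (fun _ : Γ => ℂ) 2 →L[ℂ] lp (fun _ : Γ => ℂ) 2))
    (hTr_center : ∀ a ∈ M, Tr a ∈ M ∧ ∀ b ∈ M, Tr a * b = b * Tr a)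
    (hTr_trace : ∀ a ∈ M, ∀ b ∈ M, Tr (a * b) = Tr (b * a))
    -- γ is not σ-regular
    (γ : Γ)
    (hγ : ¬ ∀ γ' : Γ, γ * γ' = γ' * γ → σ γ γ' = σ γ' γ) :
    Tr (lam γ) = 0 := by
  -- basic facts about σ
  have hσ_ne : ∀ x y, σ x y ≠ 0 := by
    intro x y h
    have := hσ_unit x y
    rw [h] at this
    simp at this
  have hσ1 : ∀ z : Γ, σ 1 z = 1 := by
    intro z
    have h := hσ_cocycle 1 1 z
    rw [one_mul, one_mul, hσ_one, one_mul] at h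
    nth_rewrite 1 [← mul_one (σ 1 z)] at h
    exact (mul_left_cancel₀ (hσ_ne 1 z) h).symm
  have hσ1' : ∀ z : Γ, σ z 1 = 1 := by
    intro z
    have h := hσ_cocycle z 1 1
    rw [mul_one, one_mul, hσ_one, mul_one] at h
    exact mul_left_cancel₀ (hσ_ne z 1) (h.trans (mul_one _).symm)
  -- the multiplication rule for lam
  have hmul : ∀ a b : Γ, lam a * lam b = σ a b • lam (a * b) := by
    intro a b
    ext f γ'
    rw [ContinuousLinearMap.mul_apply, ContinuousLinearMap.smul_apply,
      lp.coeFn_smul, Pi.smul_apply, hlam, hlam, hlam]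
    have hz : (a * b)⁻¹ * γ' = b⁻¹ * (a⁻¹ * γ') := by group
    rw [hz, smul_eq_mul]
    have hc := hσ_cocycle a b (b⁻¹ * (a⁻¹ * γ'))
    have hbz : b * (b⁻¹ * (a⁻¹ * γ')) = a⁻¹ * γ' := by group
    rw [hbz] at hc
    rw [← mul_assoc, ← hc]
    ring
  have hone : lam 1 = 1 := by
    ext f γ'
    rw [hlam, ContinuousLinearMap.one_apply]
    simp [hσ1]
  -- every lam g lies in M
  have hmem : ∀ g : Γ, lam g ∈ M := by
    intro g
    rw [hM]
    intro b hb
    exact (hb g).symm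
  -- M is closed under multiplication and scalar multiplication
  have hMmul : ∀ a ∈ M, ∀ b ∈ M, a * b ∈ M := by
    intro a ha b hb
    rw [hM] at ha hb ⊢
    intro x hx
    rw [mul_assoc, hb x hx, ← mul_assoc, ha x hx, mul_assoc]
  have hMsmul : ∀ (c : ℂ), ∀ a ∈ M, c • a ∈ M := by
    intro c a ha
    rw [hM] at ha ⊢
    intro x hx
    rw [smul_mul_assoc, ha x hx, mul_smul_comm]
  -- get a witness of non-regularity
  push_neg at hγ
  obtain ⟨γ', hc, hne⟩ := hγ
  -- the inverse of lam γ'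
  set c : ℂ := σ γ' γ'⁻¹ with hcdef
  have hc' : σ γ'⁻¹ γ' = c := by
    have h := hσ_cocycle γ' γ'⁻¹ γ'
    simp only [mul_inv_cancel, inv_mul_cancel, hσ1, hσ1', one_mul, mul_one] at h
    exact h.symm
  set b : (lp (fun _ : Γ => ℂ) 2 →L[ℂ] lp (fun _ : Γ => ℂ) 2) := c⁻¹ • lam γ'⁻¹ with hbdef
  have hbM : b ∈ M := hMsmul _ _ (hmem γ'⁻¹)
  have h1 : lam γ' * b = 1 := by
    rw [hbdef, mul_smul_comm, hmul, mul_inv_cancel, hone, smul_smul,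
      inv_mul_cancel₀ (hσ_ne γ' γ'⁻¹), one_smul]
  have h2 : b * lam γ' = 1 := by
    rw [hbdef, smul_mul_assoc, hmul, inv_mul_cancel, hone, smul_smul, hc',
      inv_mul_cancel₀ (by rw [hcdef]; exact hσ_ne γ' γ'⁻¹), one_smul]
  -- the quantum exchange relation
  have hq : lam γ' * lam γ = (σ γ' γ * (σ γ γ')⁻¹) • (lam γ * lam γ') := by
    rw [hmul, hmul, ← hc, smul_smul]
    congr 1
    rw [mul_assoc, inv_mul_cancel₀ (hσ_ne γ γ'), mul_one]
  -- main computation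
  have key : Tr (lam γ) = (σ γ' γ * (σ γ γ')⁻¹) • Tr (lam γ) := by
    have e1 : lam γ = lam γ * b * lam γ' := by
      rw [mul_assoc, h2, mul_one]
    have e2 : Tr (lam γ * b * lam γ') = Tr (lam γ' * (lam γ * b)) :=
      hTr_trace _ (hMmul _ (hmem γ) _ hbM) _ (hmem γ')
    have e3 : lam γ' * (lam γ * b) = (σ γ' γ * (σ γ γ')⁻¹) • lam γ := by
      rw [← mul_assoc, hq, smul_mul_assoc, mul_assoc, h1, mul_one]
    calc Tr (lam γ) = Tr (lam γ * b * lam γ') := by rw [← e1]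
      _ = Tr (lam γ' * (lam γ * b)) := e2
      _ = Tr ((σ γ' γ * (σ γ γ')⁻¹) • lam γ) := by rw [e3]
      _ = (σ γ' γ * (σ γ γ')⁻¹) • Tr (lam γ) := Tr.map_smul _ _
  have hqne : σ γ' γ * (σ γ γ')⁻¹ ≠ 1 := fun h =>
    hne ((mul_inv_eq_one₀ (hσ_ne γ γ')).mp h).symm
  have hz : (1 - σ γ' γ * (σ γ γ')⁻¹) • Tr (lam γ) = 0 := by
    rw [sub_smul, one_smul, ← key, sub_self]
  exact (smul_eq_zero.mp hz).resolve_left (sub_ne_zero.mpr (Ne.symm hqne))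
end

section
/- Let Γ be a discrete group with 2-cocycle σ. The σ-twisted group von Neumann algebra vN(Γ,σ) on ℓ²(Γ) is a factor (i.e., its center consists only of scalar multiples of the identity) if and only if (Γ,σ) satisfies Kleppner's condition, i.e., the only finite σ-regular conjugacy class of Γ is the trivial class {e}. -/
/-!
A central element `a` of `vN(Γ,σ)` commutes with every `λ_σ(γ)` and with every `ρ_σ(γ)` of the
right regular representation (which lies in the commutant). The first gives `a δ_x = λ_σ(x) f`
for `f = a δ_e`, so `a` is determined by `f`; comparing with the second shows that `f` is
invariant, up to unimodular phases, under conjugation, the phase at `δ` being trivial on the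
centralizer of `δ` exactly when `δ` is `σ`-regular. So `f(δ) ≠ 0` forces `δ` to be `σ`-regular
with a finite class (`|f|` is constant on it and `f ∈ ℓ²`), and under Kleppner's condition
`f` is supported at `e`, i.e. `a` is scalar.

Conversely, if `γ ≠ e` has a finite `σ`-regular class, `σ`-regularity makes the conjugate
`λ_σ(β) λ_σ(γ) λ_σ(β)⁻¹` depend only on `βγβ⁻¹`. These conjugates form a finite set permuted
by conjugation with each `λ_σ(β)`, so their sum is central in `vN(Γ,σ)`; it is not scalar, as
its value on `δ_e` has `γ`-coordinate `1`.
-/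

open scoped lp ENNReal
open ConjAct Set

theorem Function.FactorsThrough.finite_range {α β γ : Type*} {f : α → β} {g : α → γ}
    (h : g.FactorsThrough f) (hf : (range f).Finite) : (range g).Finite := by
  rcases isEmpty_or_nonempty α with hα | ⟨⟨a⟩⟩
  · simp [range_eq_empty]
  · refine (hf.image (Function.extend f g fun _ => g a)).subset ?_
    rintro _ ⟨x, rfl⟩
    exact ⟨f x, ⟨x, rfl⟩, h.extend_apply _ x⟩

namespace lp

variable {α : Type*} {p : ℝ≥0∞}

theorem finite_setOf_le_norm {E : α → Type*} [∀ i, NormedAddCommGroup (E i)]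
    (hp : 0 < p.toReal) (f : lp E p) {ε : ℝ} (hε : 0 < ε) : {i | ε ≤ ‖f i‖}.Finite := by
  have hlim := ((lp.memℓp f).summable hp).tendsto_cofinite_zero
  have hsmall := hlim.eventually_lt_const (Real.rpow_pos_of_pos hε p.toReal)
  refine (Filter.eventually_cofinite.mp hsmall).subset ?_
  intro i hi
  exact not_lt.2 (Real.rpow_le_rpow hε.le hi hp.le)

theorem continuousLinearMap_ext_single {𝕜 F : Type*} [NormedField 𝕜] [AddCommMonoid F] [Module 𝕜 F]
    [TopologicalSpace F] [T2Space F] [DecidableEq α] [Fact (1 ≤ p)] (hp : p ≠ ⊤)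
    {S T : lp (fun _ : α => 𝕜) p →L[𝕜] F}
    (h : ∀ i, S (lp.single p i 1) = T (lp.single p i 1)) : S = T :=
  lp.ext_continuousLinearMap hp fun i => ContinuousLinearMap.ext_ring (by simpa using h i)

section WeightedComposition

variable {w : α → ℂ}

theorem memℓp_weightedComp (hp : 0 < p.toReal) (e : α ≃ α) (hw : ∀ i, ‖w i‖ = 1)
    (f : lp (fun _ : α => ℂ) p) : Memℓp (fun i => w i * f (e i)) p := by
  refine memℓp_gen ((e.summable_iff.2 ((lp.memℓp f).summable hp)).congr fun i => ?_)
  simp [hw]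

theorem norm_weightedComp (hp : 0 < p.toReal) (e : α ≃ α) (hw : ∀ i, ‖w i‖ = 1)
    (f : lp (fun _ : α => ℂ) p) :
    ‖(⟨_, memℓp_weightedComp hp e hw f⟩ : lp (fun _ : α => ℂ) p)‖ = ‖f‖ := by
  rw [lp.norm_eq_tsum_rpow hp, lp.norm_eq_tsum_rpow hp, ← e.tsum_eq (‖f ·‖ ^ p.toReal)]
  simp [hw]

variable [Fact (1 ≤ p)]

noncomputable def weightedComp (hp : p ≠ ⊤) (e : α ≃ α) (hw : ∀ i, ‖w i‖ = 1) :
    lp (fun _ : α => ℂ) p →L[ℂ] lp (fun _ : α => ℂ) p :=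
  have hp' : 0 < p.toReal := ENNReal.toReal_pos (zero_lt_one.trans_le Fact.out).ne' hp
  LinearMap.mkContinuous
    { toFun := fun f => ⟨_, memℓp_weightedComp hp' e hw f⟩
      map_add' := fun f g => lp.ext <| funext fun i => mul_add ..
      map_smul' := fun c f => lp.ext <| funext fun i => mul_left_comm .. }
    1 fun f => by simp [norm_weightedComp hp' e hw f]

end WeightedComposition

end lp

theorem centralizer_centralizer_range {ι A : Type*} [Mul A] (f : ι → A) :
    centralizer (centralizer (range f)) =
      {a | ∀ b, (∀ i, b * f i = f i * b) → a * b = b * a} := by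
  ext a
  simp [mem_centralizer_iff, eq_comm]

structure IsUnitaryCocycle {Γ : Type*} [Group Γ] (σ : Γ → Γ → ℂ) : Prop where
  norm_eq_one : ∀ x y, ‖σ x y‖ = 1
  cocycle : ∀ x y z, σ x y * σ (x * y) z = σ x (y * z) * σ y z
  map_one_one : σ 1 1 = 1

def IsSigmaRegular {Γ : Type*} [Group Γ] (σ : Γ → Γ → ℂ) (γ : Γ) : Prop :=
  ∀ γ', γ * γ' = γ' * γ → σ γ γ' = σ γ' γ

def KleppnerCondition {Γ : Type*} [Group Γ] (σ : Γ → Γ → ℂ) : Prop :=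
  ∀ γ, IsSigmaRegular σ γ → {δ | ∃ β, β⁻¹ * γ * β = δ}.Finite → γ = 1

def IsFactor {A : Type*} [Ring A] [Algebra ℂ A] (M : Set A) : Prop :=
  ∀ a ∈ M, (∀ b ∈ M, a * b = b * a) → ∃ c : ℂ, a = c • 1

namespace IsUnitaryCocycle

variable {Γ : Type*} [Group Γ] {σ : Γ → Γ → ℂ}

theorem ne_zero (hσ : IsUnitaryCocycle σ) (x y : Γ) : σ x y ≠ 0 :=
  norm_ne_zero_iff.1 (by simp [hσ.norm_eq_one])

theorem map_one_left (hσ : IsUnitaryCocycle σ) (z : Γ) : σ 1 z = 1 := by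
  have h := hσ.cocycle 1 1 z
  simp only [one_mul, hσ.map_one_one] at h
  exact mul_left_cancel₀ (hσ.ne_zero 1 z) (by rw [mul_one]; exact h.symm)

theorem map_one_right (hσ : IsUnitaryCocycle σ) (x : Γ) : σ x 1 = 1 := by
  have h := hσ.cocycle x 1 1
  simp only [mul_one, hσ.map_one_one] at h
  exact mul_left_cancel₀ (hσ.ne_zero x 1) (h.trans (mul_one _).symm)

end IsUnitaryCocycle

section ProjectiveRepresentation

variable {Γ A : Type*} [Group Γ] [Ring A] [Algebra ℂ A]

theorem ConjAct.units_smul_eq_of_coe_eq_smul {v w : Aˣ} {c : ℂ} (hc : c ≠ 0)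
    (h : (v : A) = c • (w : A)) (X : A) : toConjAct v • X = toConjAct w • X := by
  have hinv : ((v⁻¹ : Aˣ) : A) = c⁻¹ • ((w⁻¹ : Aˣ) : A) :=
    Units.inv_eq_of_mul_eq_one_right (by
      rw [h, smul_mul_smul_comm, mul_inv_cancel₀ hc, Units.mul_inv, one_smul])
  simp only [units_smul_def, ofConjAct_toConjAct, hinv, h, smul_mul_assoc, mul_smul_comm,
    smul_smul, inv_mul_cancel₀ hc, one_smul]

theorem isUnit_of_mul_eq_smul {σ : Γ → Γ → ℂ} {u : Γ → A} (h1 : u 1 = 1)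
    (hmul : ∀ x y, u x * u y = σ x y • u (x * y)) (hσ : ∀ x y, σ x y ≠ 0) (x : Γ) :
    IsUnit (u x) :=
  isUnit_iff_exists_and_exists.2
    ⟨⟨(σ x x⁻¹)⁻¹ • u x⁻¹, by
        rw [mul_smul_comm, hmul, mul_inv_cancel, h1, inv_smul_smul₀ (hσ _ _)]⟩,
      ⟨(σ x⁻¹ x)⁻¹ • u x⁻¹, by
        rw [smul_mul_assoc, hmul, inv_mul_cancel, h1, inv_smul_smul₀ (hσ _ _)]⟩⟩

def IsProjectiveRep (σ : Γ → Γ → ℂ) (u : Γ → Aˣ) : Prop :=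
  ∀ x y, (u x * u y : A) = σ x y • (u (x * y) : A)

namespace IsProjectiveRep

variable {σ : Γ → Γ → ℂ} {u : Γ → Aˣ}

theorem conj_mul (hu : IsProjectiveRep σ u) (hσ : ∀ x y, σ x y ≠ 0) (x y : Γ) (X : A) :
    toConjAct (u (x * y)) • X = toConjAct (u x) • toConjAct (u y) • X := by
  rw [smul_smul, ← map_mul]
  exact (ConjAct.units_smul_eq_of_coe_eq_smul (hσ x y) (by simpa using hu x y) X).symm

theorem conj_eq_self (hu : IsProjectiveRep σ u) {γ g : Γ} (hcomm : γ * g = g * γ)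
    (hσ : σ γ g = σ g γ) : toConjAct (u g) • (u γ : A) = u γ := by
  rw [units_smul_def, ofConjAct_toConjAct, Units.mul_inv_eq_iff_eq_mul, hu, hu, hcomm, hσ]

theorem conj_factorsThrough (hu : IsProjectiveRep σ u) (hσ : ∀ x y, σ x y ≠ 0) {γ : Γ}
    (hγ : IsSigmaRegular σ γ) :
    (fun β => toConjAct (u β) • (u γ : A)).FactorsThrough (fun β => β * γ * β⁻¹) := by
  intro β₁ β₂ (h : β₁ * γ * β₁⁻¹ = β₂ * γ * β₂⁻¹)
  have hcomm : γ * (β₂⁻¹ * β₁) = β₂⁻¹ * β₁ * γ := by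
    calc γ * (β₂⁻¹ * β₁) = β₂⁻¹ * (β₂ * γ * β₂⁻¹) * β₁ := by group
      _ = β₂⁻¹ * (β₁ * γ * β₁⁻¹) * β₁ := by rw [← h]
      _ = β₂⁻¹ * β₁ * γ := by group
  simp only
  rw [← mul_inv_cancel_left β₂ β₁, hu.conj_mul hσ, hu.conj_eq_self hcomm (hγ _ hcomm)]

theorem commute_sum_conj (hu : IsProjectiveRep σ u) (hσ : ∀ x y, σ x y ≠ 0) {γ : Γ}
    (hS : (range fun β => toConjAct (u β) • (u γ : A)).Finite) (β : Γ) :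
    Commute (∑ T ∈ hS.toFinset, T) (u β) := by
  classical
  set S := hS.toFinset
  have hmaps : ∀ T ∈ S, toConjAct (u β) • T ∈ S := by
    simp only [S, Finite.mem_toFinset]
    rintro _ ⟨β', rfl⟩
    exact ⟨β * β', hu.conj_mul hσ β β' _⟩
  have himage : S.image (toConjAct (u β) • ·) = S :=
    Finset.eq_of_subset_of_card_le (Finset.image_subset_iff.2 hmaps)
      (Finset.card_image_of_injective _ (MulAction.injective _)).ge
  have hinv : toConjAct (u β) • ∑ T ∈ S, T = ∑ T ∈ S, T := by
    conv_rhs => rw [← himage]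
    rw [Finset.smul_sum, Finset.sum_image fun _ _ _ _ h => MulAction.injective _ h]
  rw [units_smul_def, ofConjAct_toConjAct, Units.mul_inv_eq_iff_eq_mul] at hinv
  exact hinv.symm

end IsProjectiveRep

theorem conj_mem_centralizer_centralizer {Γ A : Type*} [Monoid A] (u : Γ → Aˣ) (β γ : Γ) :
    toConjAct (u β) • (u γ : A) ∈ centralizer (centralizer (range fun x => (u x : A))) := by
  have hu : ∀ x, (u x : A) ∈ centralizer (centralizer (range fun x => (u x : A))) :=
    fun x => subset_centralizer_centralizer ⟨x, rfl⟩
  have hu_inv : (((u β)⁻¹ : Aˣ) : A) ∈ centralizer (centralizer (range fun x => (u x : A))) :=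
    fun m hm => (Commute.units_inv_right (hm _ ⟨β, rfl⟩).symm).eq
  rw [units_smul_def, ofConjAct_toConjAct]
  exact mul_mem_centralizer (mul_mem_centralizer (hu β) (hu γ)) hu_inv

theorem sum_conj_mem_centralizer_centralizer {Γ A : Type*} [Ring A] [Algebra ℂ A] {u : Γ → Aˣ}
    {γ : Γ} (hS : (range fun β => toConjAct (u β) • (u γ : A)).Finite) :
    ∑ T ∈ hS.toFinset, T ∈ centralizer (centralizer (range fun x => (u x : A))) :=
  (Subalgebra.centralizer ℂ _).sum_mem fun T hT => by
    obtain ⟨β, rfl⟩ := hS.mem_toFinset.1 hT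
    exact conj_mem_centralizer_centralizer u β γ

end ProjectiveRepresentation

section TwistedRegularRepresentation

variable {Γ : Type*} [Group Γ] {σ : Γ → Γ → ℂ}

structure IsTwistedLeftRegularRep (σ : Γ → Γ → ℂ) (lam : Γ → ℓ²(Γ, ℂ) →L[ℂ] ℓ²(Γ, ℂ)) :
    Prop where
  apply_apply : ∀ γ (f : ℓ²(Γ, ℂ)) γ', lam γ f γ' = σ γ (γ⁻¹ * γ') * f (γ⁻¹ * γ')

noncomputable def twistedRightRegular (hσ : IsUnitaryCocycle σ) (γ : Γ) :
    ℓ²(Γ, ℂ) →L[ℂ] ℓ²(Γ, ℂ) :=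
  lp.weightedComp ENNReal.ofNat_ne_top (Equiv.mulRight γ) (w := fun x => (σ x γ)⁻¹)
    fun x => by simp [hσ.norm_eq_one]

@[simp]
theorem twistedRightRegular_apply (hσ : IsUnitaryCocycle σ) (γ : Γ) (f : ℓ²(Γ, ℂ)) (x : Γ) :
    twistedRightRegular hσ γ f x = (σ x γ)⁻¹ * f (x * γ) :=
  rfl

theorem twistedRightRegular_inv_single_one [DecidableEq Γ] (hσ : IsUnitaryCocycle σ) (x : Γ) :
    twistedRightRegular hσ x⁻¹ (lp.single 2 1 1) = (σ x x⁻¹)⁻¹ • lp.single 2 x 1 := by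
  ext y
  rcases eq_or_ne y x with rfl | hy
  · simp
  · simp [hy, mul_inv_eq_one]

theorem apply_single_of_commute_twistedRightRegular [DecidableEq Γ] (hσ : IsUnitaryCocycle σ)
    {a : ℓ²(Γ, ℂ) →L[ℂ] ℓ²(Γ, ℂ)} (ha : ∀ γ, Commute a (twistedRightRegular hσ γ)) (x : Γ) :
    a (lp.single 2 x 1) = σ x x⁻¹ • twistedRightRegular hσ x⁻¹ (a (lp.single 2 1 1)) := by
  have h := congrArg (· (lp.single 2 1 1)) (ha x⁻¹).eq
  simp only [mul_apply_eq_comp, twistedRightRegular_inv_single_one, map_smul] at h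
  rw [← h, smul_inv_smul₀ (hσ.ne_zero _ _)]

namespace IsTwistedLeftRegularRep

variable {lam : Γ → ℓ²(Γ, ℂ) →L[ℂ] ℓ²(Γ, ℂ)}

theorem mul_eq (hlam : IsTwistedLeftRegularRep σ lam) (hσ : IsUnitaryCocycle σ) (x y : Γ) :
    lam x * lam y = σ x y • lam (x * y) := by
  ext f γ'
  have hc := hσ.cocycle x y (y⁻¹ * (x⁻¹ * γ'))
  rw [mul_inv_cancel_left] at hc
  simp only [mul_apply_eq_comp, smul_apply, lp.coeFn_smul,
    Pi.smul_apply, smul_eq_mul, hlam.apply_apply, mul_inv_rev, mul_assoc]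
  linear_combination f (y⁻¹ * (x⁻¹ * γ')) * hc.symm

theorem one_eq (hlam : IsTwistedLeftRegularRep σ lam) (hσ : IsUnitaryCocycle σ) : lam 1 = 1 := by
  ext f γ'
  simp [hlam.apply_apply, hσ.map_one_left]

theorem apply_single [DecidableEq Γ] (hlam : IsTwistedLeftRegularRep σ lam) (γ x : Γ) :
    lam γ (lp.single 2 x 1) = σ γ x • lp.single 2 (γ * x) 1 := by
  ext y
  rcases eq_or_ne y (γ * x) with rfl | hy
  · simp [hlam.apply_apply]
  · have hx : γ⁻¹ * y ≠ x := fun h => hy (by rw [← h, mul_inv_cancel_left])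
    simp [hlam.apply_apply, hx, hy]

theorem apply_single_one [DecidableEq Γ] (hlam : IsTwistedLeftRegularRep σ lam)
    (hσ : IsUnitaryCocycle σ) (x : Γ) : lam x (lp.single 2 1 1) = lp.single 2 x 1 := by
  rw [hlam.apply_single, hσ.map_one_right, one_smul, mul_one]

theorem commute_twistedRightRegular (hlam : IsTwistedLeftRegularRep σ lam)
    (hσ : IsUnitaryCocycle σ) (β γ : Γ) : Commute (lam β) (twistedRightRegular hσ γ) := by
  ext f x
  have hc := hσ.cocycle β (β⁻¹ * x) γ
  rw [mul_inv_cancel_left, mul_assoc β⁻¹ x γ] at hc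
  simp only [mul_apply_eq_comp, twistedRightRegular_apply, hlam.apply_apply, mul_assoc]
  field_simp [hσ.ne_zero]
  linear_combination f (β⁻¹ * (x * γ)) * hc

theorem isUnit (hlam : IsTwistedLeftRegularRep σ lam) (hσ : IsUnitaryCocycle σ) (x : Γ) :
    IsUnit (lam x) :=
  isUnit_of_mul_eq_smul (hlam.one_eq hσ) (hlam.mul_eq hσ) hσ.ne_zero x

noncomputable def unit (hlam : IsTwistedLeftRegularRep σ lam) (hσ : IsUnitaryCocycle σ) (x : Γ) :
    (ℓ²(Γ, ℂ) →L[ℂ] ℓ²(Γ, ℂ))ˣ :=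
  (hlam.isUnit hσ x).unit

@[simp]
theorem coe_unit (hlam : IsTwistedLeftRegularRep σ lam) (hσ : IsUnitaryCocycle σ) (x : Γ) :
    (hlam.unit hσ x : ℓ²(Γ, ℂ) →L[ℂ] ℓ²(Γ, ℂ)) = lam x :=
  rfl

theorem isProjectiveRep_unit (hlam : IsTwistedLeftRegularRep σ lam) (hσ : IsUnitaryCocycle σ) :
    IsProjectiveRep σ (hlam.unit hσ) :=
  hlam.mul_eq hσ

theorem conj_apply_single_one [DecidableEq Γ] (hlam : IsTwistedLeftRegularRep σ lam)
    (hσ : IsUnitaryCocycle σ) (β γ : Γ) :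
    ∃ c : ℂ, (toConjAct (hlam.unit hσ β) • lam γ) (lp.single 2 1 1) =
      c • lp.single 2 (β * γ * β⁻¹) 1 := by
  have hinv : (((hlam.unit hσ β)⁻¹ : (ℓ²(Γ, ℂ) →L[ℂ] ℓ²(Γ, ℂ))ˣ) : ℓ²(Γ, ℂ) →L[ℂ] ℓ²(Γ, ℂ))
      (lp.single 2 1 1) = (σ β β⁻¹)⁻¹ • lp.single 2 β⁻¹ 1 := by
    have h : lam β ((σ β β⁻¹)⁻¹ • lp.single 2 β⁻¹ 1) = lp.single 2 1 1 := by
      rw [map_smul, hlam.apply_single, mul_inv_cancel, inv_smul_smul₀ (hσ.ne_zero _ _)]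
    rw [← h, ← hlam.coe_unit hσ, ← mul_apply_eq_comp, Units.inv_mul, one_apply_eq_self]
  exact ⟨(σ β β⁻¹)⁻¹ * (σ γ β⁻¹ * σ β (γ * β⁻¹)), by
    simp [units_smul_def, hinv, hlam.apply_single, smul_smul, mul_assoc]⟩

theorem sum_conj_apply_single_one_self [DecidableEq Γ] (hlam : IsTwistedLeftRegularRep σ lam)
    (hσ : IsUnitaryCocycle σ) {γ : Γ} (hγ : IsSigmaRegular σ γ)
    (hS : (range fun β => toConjAct (hlam.unit hσ β) • lam γ).Finite) :
    (∑ T ∈ hS.toFinset, T) (lp.single 2 1 1) γ = 1 := by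
  have hfactors := (hlam.isProjectiveRep_unit hσ).conj_factorsThrough hσ.ne_zero hγ
  have hconj_one : toConjAct (hlam.unit hσ 1) • lam γ = lam γ := by
    simpa using (hlam.isProjectiveRep_unit hσ).conj_eq_self (g := 1) (by group) (by
      rw [hσ.map_one_left, hσ.map_one_right])
  rw [sum_apply, lp.coeFn_sum, Finset.sum_apply,
    Finset.sum_eq_single_of_mem (lam γ) (hS.mem_toFinset.2 ⟨1, hconj_one⟩)]
  · simp [hlam.apply_single_one hσ]
  · rintro _ hT hne
    obtain ⟨β, rfl⟩ := hS.mem_toFinset.1 hT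
    obtain ⟨c, hc⟩ := hlam.conj_apply_single_one hσ β γ
    have hβ : γ ≠ β * γ * β⁻¹ := fun h => hne ((hfactors (by simpa using h.symm)).trans hconj_one)
    simp [hc, hβ]

section Commutant

variable [DecidableEq Γ] {a : ℓ²(Γ, ℂ) →L[ℂ] ℓ²(Γ, ℂ)}

theorem apply_single_of_commute (hlam : IsTwistedLeftRegularRep σ lam) (hσ : IsUnitaryCocycle σ)
    (ha : ∀ γ, Commute a (lam γ)) (x : Γ) : a (lp.single 2 x 1) = lam x (a (lp.single 2 1 1)) := by
  simpa [hlam.apply_single_one hσ] using congrArg (· (lp.single 2 1 1)) (ha x).eq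

theorem apply_conj_of_commute (hlam : IsTwistedLeftRegularRep σ lam) (hσ : IsUnitaryCocycle σ)
    (hl : ∀ γ, Commute a (lam γ)) (hr : ∀ γ, Commute a (twistedRightRegular hσ γ)) (x δ : Γ) :
    σ x δ * a (lp.single 2 1 1) δ =
      σ x x⁻¹ * (σ (x * δ) x⁻¹)⁻¹ * a (lp.single 2 1 1) (x * δ * x⁻¹) := by
  have h := congrArg (· (x * δ)) ((hlam.apply_single_of_commute hσ hl x).symm.trans
    (apply_single_of_commute_twistedRightRegular hσ hr x))
  simpa [hlam.apply_apply, mul_assoc] using h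

theorem norm_apply_conj_of_commute (hlam : IsTwistedLeftRegularRep σ lam)
    (hσ : IsUnitaryCocycle σ) (hl : ∀ γ, Commute a (lam γ))
    (hr : ∀ γ, Commute a (twistedRightRegular hσ γ)) (x δ : Γ) :
    ‖a (lp.single 2 1 1) (x * δ * x⁻¹)‖ = ‖a (lp.single 2 1 1) δ‖ := by
  simpa [hσ.norm_eq_one] using (congrArg norm (hlam.apply_conj_of_commute hσ hl hr x δ)).symm

theorem isSigmaRegular_of_apply_ne_zero (hlam : IsTwistedLeftRegularRep σ lam)
    (hσ : IsUnitaryCocycle σ) (hl : ∀ γ, Commute a (lam γ))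
    (hr : ∀ γ, Commute a (twistedRightRegular hσ γ)) {δ : Γ} (hδ : a (lp.single 2 1 1) δ ≠ 0) :
    IsSigmaRegular σ δ := by
  intro x hcomm
  have h := hlam.apply_conj_of_commute hσ hl hr x δ
  rw [← hcomm, mul_inv_cancel_right] at h
  have hc := hσ.cocycle δ x x⁻¹
  rw [mul_inv_cancel, hσ.map_one_right, one_mul] at hc
  rw [mul_right_cancel₀ hδ h, ← hc, mul_inv_cancel_right₀ (hσ.ne_zero _ _)]

theorem finite_conj_of_apply_ne_zero (hlam : IsTwistedLeftRegularRep σ lam)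
    (hσ : IsUnitaryCocycle σ) (hl : ∀ γ, Commute a (lam γ))
    (hr : ∀ γ, Commute a (twistedRightRegular hσ γ)) {δ : Γ} (hδ : a (lp.single 2 1 1) δ ≠ 0) :
    {δ' | ∃ β, β⁻¹ * δ * β = δ'}.Finite := by
  refine (lp.finite_setOf_le_norm (by norm_num) (a (lp.single 2 1 1)) (norm_pos_iff.2 hδ)).subset ?_
  rintro _ ⟨β, rfl⟩
  simpa using (hlam.norm_apply_conj_of_commute hσ hl hr β⁻¹ δ).ge

theorem eq_smul_one_of_commute (hlam : IsTwistedLeftRegularRep σ lam) (hσ : IsUnitaryCocycle σ)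
    (hK : KleppnerCondition σ) (hl : ∀ γ, Commute a (lam γ))
    (hr : ∀ γ, Commute a (twistedRightRegular hσ γ)) :
    a = a (lp.single 2 1 1) 1 • 1 := by
  set f := a (lp.single 2 1 1)
  have hf : f = f 1 • lp.single 2 1 1 := by
    ext δ
    rcases eq_or_ne δ 1 with rfl | hδ
    · simp
    · have hfδ : f δ = 0 := by
        by_contra hfδ
        exact hδ (hK δ (hlam.isSigmaRegular_of_apply_ne_zero hσ hl hr hfδ)
          (hlam.finite_conj_of_apply_ne_zero hσ hl hr hfδ))
      simp [hfδ, hδ]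
  refine lp.continuousLinearMap_ext_single ENNReal.ofNat_ne_top fun x => ?_
  calc a (lp.single 2 x 1) = lam x f := hlam.apply_single_of_commute hσ hl x
    _ = lam x (f 1 • lp.single 2 1 1) := congrArg (lam x) hf
    _ = (f 1 • 1 : ℓ²(Γ, ℂ) →L[ℂ] ℓ²(Γ, ℂ)) (lp.single 2 x 1) := by
      rw [map_smul, hlam.apply_single_one hσ]; rfl

end Commutant

theorem kleppnerCondition_of_isFactor (hlam : IsTwistedLeftRegularRep σ lam)
    (hσ : IsUnitaryCocycle σ) (hM : IsFactor (centralizer (centralizer (range lam)))) :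
    KleppnerCondition σ := by
  classical
  intro γ hγ hfin
  by_contra hγ1
  have hu := hlam.isProjectiveRep_unit hσ
  have hS : (range fun β => toConjAct (hlam.unit hσ β) • lam γ).Finite :=
    (hu.conj_factorsThrough hσ.ne_zero hγ).finite_range
      (hfin.subset (by rintro _ ⟨β, rfl⟩; exact ⟨β⁻¹, by group⟩))
  have hZ := sum_conj_mem_centralizer_centralizer hS
  simp only [coe_unit] at hZ
  obtain ⟨c, hc⟩ := hM _ hZ fun b hb =>
    hb _ (by rintro _ ⟨β, rfl⟩; simpa using (hu.commute_sum_conj hσ.ne_zero hS β).eq.symm)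
  have h := hlam.sum_conj_apply_single_one_self hσ hγ hS
  simp [hc, Ne.symm hγ1] at h

theorem isFactor_of_kleppnerCondition (hlam : IsTwistedLeftRegularRep σ lam)
    (hσ : IsUnitaryCocycle σ) (hK : KleppnerCondition σ) :
    IsFactor (centralizer (centralizer (range lam))) := by
  classical
  intro a ha hcentral
  refine ⟨_, hlam.eq_smul_one_of_commute hσ hK (fun γ => ?_) (fun γ => (ha _ ?_).symm)⟩
  · exact hcentral _ (subset_centralizer_centralizer ⟨γ, rfl⟩)
  · rintro _ ⟨β, rfl⟩
    exact (hlam.commute_twistedRightRegular hσ β γ).eq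

end IsTwistedLeftRegularRep

end TwistedRegularRepresentation

/-- the twisted group von Neumann algebra `vN(Γ,σ)` is a factor if and only
if `(Γ,σ)` satisfies Kleppner's condition: the only finite `σ`-regular conjugacy class is
the trivial one. -/
theorem twistedGroupVonNeumannAlgebra_factor_iff_kleppner {Γ : Type*} [Group Γ]
    (σ : Γ → Γ → ℂ)
    (hσ_unit : ∀ x y, ‖σ x y‖ = 1)
    (hσ_cocycle : ∀ x y z, σ x y * σ (x * y) z = σ x (y * z) * σ y z)
    (hσ_one : σ 1 1 = 1)
    -- the σ-projective left regular representation on ℓ²(Γ)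
    (lam : Γ → (lp (fun _ : Γ => ℂ) 2 →L[ℂ] lp (fun _ : Γ => ℂ) 2))
    (hlam : ∀ (γ : Γ) (f : lp (fun _ : Γ => ℂ) 2) (γ' : Γ),
      (lam γ f) γ' = σ γ (γ⁻¹ * γ') * f (γ⁻¹ * γ'))
    -- M = vN(Γ,σ), the double commutant of {λ_σ(γ)}
    (M : Set (lp (fun _ : Γ => ℂ) 2 →L[ℂ] lp (fun _ : Γ => ℂ) 2))
    (hM : M = {a | ∀ b, (∀ γ : Γ, b * lam γ = lam γ * b) → a * b = b * a}) :
    -- M is a factor ↔ Kleppner's condition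
    (∀ a ∈ M, (∀ b ∈ M, a * b = b * a) → ∃ c : ℂ, a = c • (1 : lp (fun _ : Γ => ℂ) 2 →L[ℂ] lp (fun _ : Γ => ℂ) 2))
      ↔ (∀ γ : Γ, (∀ γ' : Γ, γ * γ' = γ' * γ → σ γ γ' = σ γ' γ) →
          {δ : Γ | ∃ β : Γ, β⁻¹ * γ * β = δ}.Finite → γ = 1) := by
  have hσ : IsUnitaryCocycle σ := ⟨hσ_unit, hσ_cocycle, hσ_one⟩
  have hlam : IsTwistedLeftRegularRep σ lam := ⟨hlam⟩
  rw [hM, ← centralizer_centralizer_range]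
  exact ⟨hlam.kleppnerCondition_of_isFactor hσ, hlam.isFactor_of_kleppnerCondition hσ⟩
end

section
/- Let G be a second countable, unimodular, locally compact group with Haar measure, σ a 2-cocycle on G, Γ a discrete subgroup of G, and B ⊆ G a Borel fundamental domain for Γ (i.e., {γB : γ ∈ Γ} partitions G). Then the map U from the Hilbert space of square-summable L²(B)-valued families over Γ (equivalently ℓ²(Γ) ⊗ L²(B)) to L²(G), determined by U(f ⊗ g)(γy) = σ(γ,y) f(γ) g(y) for γ ∈ Γ and y ∈ B, is a well-defined unitary operator, and for every γ ∈ Γ it satisfies U ∘ (λ_σ^Γ(γ) ⊗ I) = λ_σ^G(γ) ∘ U, where λ_σ^Γ and λ_σ^G are the σ-projective left regular representations of Γ on ℓ²(Γ) and of G on L²(G) respectively. -/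
/-!
The translates `γ • B` partition `G`, so `L²(G)` is the orthogonal direct sum of the subspaces of
functions supported on `γ • B`. Since `σ` is unimodular and Haar measure is left invariant, the
twisted translation `V_γ g (γ y) = σ(γ, y) g(y)` maps `L²(B)` isometrically onto the subspace
supported on `γ • B`; hence `(V_γ)_γ` is a Hilbert sum and `U F = ∑ γ, V_γ (F γ)` is unitary.
The cocycle identity gives `λ_σ(γ) ∘ V_δ = σ(γ, δ) • V_{γδ}`, which after reindexing the sum is
the intertwining relation.
-/

open MeasureTheory Function
open scoped ENNReal Pointwise

namespace MeasureTheory.Lp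

variable {α E 𝕜 : Type*} [MeasurableSpace α] {μ : Measure α} [NormedAddCommGroup E]
  [NormedField 𝕜] [NormedSpace 𝕜 E] {p : ℝ≥0∞}

theorem memLp_indicator {s : Set α} (hs : MeasurableSet s) (f : Lp E p (μ.restrict s)) :
    MemLp (s.indicator f) p μ :=
  (memLp_indicator_iff_restrict hs).2 (Lp.memLp f)

theorem eLpNorm_unimodular_smul {c : α → 𝕜} (hc : ∀ᵐ x ∂μ, ‖c x‖ = 1) (f : Lp E p μ) :
    eLpNorm (fun x => c x • f x) p μ = eLpNorm f p μ := by
  refine eLpNorm_congr_norm_ae ?_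
  filter_upwards [hc] with x hx
  rw [norm_smul, hx, one_mul]

theorem memLp_unimodular_smul {c : α → 𝕜} (hc_meas : AEStronglyMeasurable c μ)
    (hc : ∀ᵐ x ∂μ, ‖c x‖ = 1) (f : Lp E p μ) : MemLp (fun x => c x • f x) p μ :=
  ⟨hc_meas.smul (Lp.aestronglyMeasurable f),
    (eLpNorm_unimodular_smul hc f).symm ▸ Lp.eLpNorm_lt_top f⟩

variable [Fact (1 ≤ p)]

variable (𝕜) in
noncomputable def extendByZeroₗᵢ {s : Set α} (hs : MeasurableSet s) :
    Lp E p (μ.restrict s) →ₗᵢ[𝕜] Lp E p μ where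
  toFun f := (memLp_indicator hs f).toLp _
  map_add' f g := by
    rw [← MemLp.toLp_add]
    refine MemLp.toLp_congr _ _ ?_
    rw [← Set.indicator_add']
    exact (ae_eq_restrict_iff_indicator_ae_eq hs).1 (Lp.coeFn_add f g)
  map_smul' c f := by
    rw [RingHom.id_apply, ← MemLp.toLp_const_smul]
    refine MemLp.toLp_congr _ _ ?_
    refine ((ae_eq_restrict_iff_indicator_ae_eq hs).1 (Lp.coeFn_smul c f)).trans ?_
    exact (Set.indicator_const_smul s c f).eventuallyEq
  norm_map' f := by
    rw [LinearMap.coe_mk, AddHom.coe_mk, Lp.norm_toLp, eLpNorm_indicator_eq_eLpNorm_restrict hs,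
      Lp.norm_def]

variable (𝕜) in
theorem coeFn_extendByZeroₗᵢ {s : Set α} (hs : MeasurableSet s) (f : Lp E p (μ.restrict s)) :
    extendByZeroₗᵢ 𝕜 hs f =ᵐ[μ] s.indicator f :=
  (memLp_indicator hs f).coeFn_toLp

variable {c : α → 𝕜} (hc_meas : AEStronglyMeasurable c μ) (hc : ∀ᵐ x ∂μ, ‖c x‖ = 1)

variable (E p) in
noncomputable def unimodularSMulₗᵢ : Lp E p μ →ₗᵢ[𝕜] Lp E p μ where
  toFun f := (memLp_unimodular_smul hc_meas hc f).toLp _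
  map_add' f g := by
    rw [← MemLp.toLp_add]
    refine MemLp.toLp_congr _ _ ?_
    filter_upwards [Lp.coeFn_add f g] with x hx
    rw [hx, Pi.add_apply, smul_add, Pi.add_apply]
  map_smul' a f := by
    rw [RingHom.id_apply, ← MemLp.toLp_const_smul]
    refine MemLp.toLp_congr _ _ ?_
    filter_upwards [Lp.coeFn_smul a f] with x hx
    rw [hx, Pi.smul_apply, Pi.smul_apply, smul_comm]
  norm_map' f := by
    rw [LinearMap.coe_mk, AddHom.coe_mk, Lp.norm_toLp, eLpNorm_unimodular_smul hc f,
      Lp.norm_def]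

theorem coeFn_unimodularSMulₗᵢ (f : Lp E p μ) :
    unimodularSMulₗᵢ E p hc_meas hc f =ᵐ[μ] fun x => c x • f x :=
  (memLp_unimodular_smul hc_meas hc f).coeFn_toLp

end MeasureTheory.Lp

namespace MeasureTheory

variable {α 𝕜 E ι : Type*} [MeasurableSpace α] {μ : Measure α} [RCLike 𝕜]
  [NormedAddCommGroup E] [InnerProductSpace 𝕜 E]
  {Gs : ι → Type*} [∀ i, NormedAddCommGroup (Gs i)] [∀ i, InnerProductSpace 𝕜 (Gs i)]
  {V : ∀ i, Gs i →ₗᵢ[𝕜] Lp E 2 μ} {s : ι → Set α}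

theorem L2.inner_eq_zero_of_ae_eq_indicator {f g : Lp E 2 μ} {s t : Set α} (hst : Disjoint s t)
    (hf : f =ᵐ[μ] s.indicator f) (hg : g =ᵐ[μ] t.indicator g) : inner 𝕜 f g = 0 := by
  rw [L2.inner_def]
  refine integral_eq_zero_of_ae ?_
  filter_upwards [hf, hg] with x hfx hgx
  rw [hfx, hgx]
  by_cases hx : x ∈ s
  · rw [Set.indicator_of_notMem (hst.notMem_of_mem_left hx), inner_zero_right, Pi.zero_apply]
  · rw [Set.indicator_of_notMem hx, inner_zero_left, Pi.zero_apply]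

theorem L2.inner_eq_inner_self_of_ae_eq_indicator {f g : Lp E 2 μ} {s : Set α}
    (hg : g =ᵐ[μ] s.indicator f) : inner 𝕜 g f = inner 𝕜 g g := by
  rw [L2.inner_def, L2.inner_def]
  refine integral_congr_ae ?_
  filter_upwards [hg] with x hgx
  rw [hgx]
  by_cases hx : x ∈ s
  · rw [Set.indicator_of_mem hx]
  · rw [Set.indicator_of_notMem hx, inner_zero_left, inner_zero_left]

variable [CompleteSpace E]

theorem isHilbertSum_of_ae_eq_indicator [Countable ι] [∀ i, CompleteSpace (Gs i)]
    (hdisj : Pairwise (Disjoint on s))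
    (hcover : ∀ x, ∃ i, x ∈ s i) (hsupp : ∀ i g, V i g =ᵐ[μ] (s i).indicator (V i g))
    (hrange : ∀ i (f : Lp E 2 μ), ∃ g, V i g =ᵐ[μ] (s i).indicator f) :
    IsHilbertSum 𝕜 Gs V := by
  refine IsHilbertSum.mk (fun i j hij g g' => ?_) ?_
  · exact L2.inner_eq_zero_of_ae_eq_indicator (hdisj hij) (hsupp i g) (hsupp j g')
  rw [top_le_iff, Submodule.topologicalClosure_eq_top_iff, Submodule.eq_bot_iff]
  intro f hf
  have hvanish : ∀ i, (s i).indicator f =ᵐ[μ] 0 := fun i => by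
    obtain ⟨g, hg⟩ := hrange i f
    have horth : inner 𝕜 (V i g) f = 0 :=
      (Submodule.mem_orthogonal _ _).1 hf _
        (Submodule.mem_iSup_of_mem i (LinearMap.mem_range_self _ g))
    rw [L2.inner_eq_inner_self_of_ae_eq_indicator hg, inner_self_eq_zero] at horth
    exact hg.symm.trans (horth ▸ Lp.coeFn_zero _ _ _)
  refine Lp.eq_zero_iff_ae_eq_zero.2 ?_
  filter_upwards [ae_all_iff.2 hvanish] with x hx
  obtain ⟨i, hi⟩ := hcover x
  simpa [Set.indicator_of_mem hi] using hx i

theorem IsHilbertSum.linearIsometryEquiv_symm_ae_eq_restrict (hV : IsHilbertSum 𝕜 Gs V)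
    (hs : ∀ i, MeasurableSet (s i)) (hdisj : Pairwise (Disjoint on s))
    (hsupp : ∀ i g, V i g =ᵐ[μ] (s i).indicator (V i g)) (F : lp Gs 2) (i : ι) :
    hV.linearIsometryEquiv.symm F =ᵐ[μ.restrict (s i)] V i (F i) := by
  -- Restriction to `s i` is continuous, so it passes through the series `∑ j, V j (F j)`.
  set R := LpToLpRestrictCLM α E 𝕜 μ 2 (s i)
  have hR : ∀ f, R f =ᵐ[μ.restrict (s i)] f := LpToLpRestrictCLM_coeFn 𝕜 (s i)
  have hRV : ∀ j ≠ i, R (V j (F j)) = 0 := fun j hji => by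
    refine Lp.eq_zero_iff_ae_eq_zero.2 ((hR _).trans ?_)
    filter_upwards [ae_restrict_of_ae (hsupp j (F j)), ae_restrict_mem (hs i)] with x hx hxi
    rw [hx, Set.indicator_of_notMem ((hdisj hji).notMem_of_mem_right hxi), Pi.zero_apply]
  have hRU : R (hV.linearIsometryEquiv.symm F) = R (V i (F i)) := by
    rw [hV.linearIsometryEquiv_symm_apply, R.map_tsum (hV.OrthogonalFamily.summable_of_lp F),
      tsum_eq_single i hRV]
  exact (hR _).symm.trans (hRU ▸ hR _)

end MeasureTheory

section TwistedTranslate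

variable {G : Type*} [Group G] [MeasurableSpace G] [MeasurableMul G] {μ : Measure G}
  [μ.IsMulLeftInvariant] {B : Set G}

theorem measurePreserving_inv_mul_left_restrict_smul (hB : MeasurableSet B) (x : G) :
    MeasurePreserving (x⁻¹ * ·) (μ.restrict (x • B)) (μ.restrict B) := by
  have h := (measurePreserving_mul_left μ x⁻¹).restrict_preimage hB
  rwa [show ((x⁻¹ * ·) ⁻¹' B) = x • B from Set.preimage_smul_inv x B] at h

theorem measurePreserving_mul_left_restrict (hB : MeasurableSet B) (x : G) :
    MeasurePreserving (x * ·) (μ.restrict B) (μ.restrict (x • B)) := by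
  have h := (measurePreserving_mul_left μ x).restrict_preimage (hB.const_smul x)
  rwa [show ((x * ·) ⁻¹' (x • B)) = B by ext y; simp [Set.mem_smul_set_iff_inv_smul_mem]] at h

variable (σ : G → G → ℂ) (hσ_meas : Measurable fun q : G × G => σ q.1 q.2)
  (hσ_unit : ∀ x y, ‖σ x y‖ = 1) {p : ℝ≥0∞} [Fact (1 ≤ p)]

noncomputable def twistedTranslate (hB : MeasurableSet B) (x : G) :
    Lp ℂ p (μ.restrict B) →ₗᵢ[ℂ] Lp ℂ p μ :=
  (Lp.extendByZeroₗᵢ ℂ (hB.const_smul x)).comp <|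
    (Lp.compMeasurePreservingₗᵢ ℂ _ (measurePreserving_inv_mul_left_restrict_smul hB x)).comp <|
      Lp.unimodularSMulₗᵢ ℂ p hσ_meas.of_uncurry_left.aestronglyMeasurable
        (ae_of_all _ (hσ_unit x))

variable {σ} (hB : MeasurableSet B)

theorem twistedTranslate_ae_eq (x : G) {g : Lp ℂ p (μ.restrict B)} {f : G → ℂ}
    (hg : g =ᵐ[μ.restrict B] f) :
    twistedTranslate σ hσ_meas hσ_unit hB x g =ᵐ[μ]
      (x • B).indicator fun z => σ x (x⁻¹ * z) * f (x⁻¹ * z) := by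
  have hweight : Lp.unimodularSMulₗᵢ ℂ p hσ_meas.of_uncurry_left.aestronglyMeasurable
      (ae_of_all _ (hσ_unit x)) g =ᵐ[μ.restrict B] fun y => σ x y * f y := by
    filter_upwards [Lp.coeFn_unimodularSMulₗᵢ hσ_meas.of_uncurry_left.aestronglyMeasurable
      (ae_of_all _ (hσ_unit x)) g, hg] with y hy hgy
    rw [hy, hgy, smul_eq_mul]
  have hmp := measurePreserving_inv_mul_left_restrict_smul (μ := μ) hB x
  refine (Lp.coeFn_extendByZeroₗᵢ ℂ (hB.const_smul x) _).trans
    ((ae_eq_restrict_iff_indicator_ae_eq (hB.const_smul x)).1 ?_)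
  exact (Lp.coeFn_compMeasurePreserving _ hmp).trans
    (hmp.quasiMeasurePreserving.ae_eq_comp hweight)

theorem twistedTranslate_ae_eq_indicator_self (x : G) (g : Lp ℂ p (μ.restrict B)) :
    twistedTranslate σ hσ_meas hσ_unit hB x g =ᵐ[μ]
      (x • B).indicator (twistedTranslate σ hσ_meas hσ_unit hB x g) := by
  filter_upwards [twistedTranslate_ae_eq hσ_meas hσ_unit hB x (g := g) (ae_eq_refl _)] with z hz
  by_cases hzB : z ∈ x • B
  · rw [Set.indicator_of_mem hzB]
  · rw [Set.indicator_of_notMem hzB, hz, Set.indicator_of_notMem hzB]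

theorem exists_twistedTranslate_ae_eq_indicator (x : G) (f : Lp ℂ p μ) :
    ∃ g : Lp ℂ p (μ.restrict B),
      twistedTranslate σ hσ_meas hσ_unit hB x g =ᵐ[μ] (x • B).indicator f := by
  have hmp := measurePreserving_mul_left_restrict (μ := μ) hB x
  have hc_meas : AEStronglyMeasurable (fun y => (σ x y)⁻¹) (μ.restrict B) :=
    hσ_meas.of_uncurry_left.inv.aestronglyMeasurable
  have hc : ∀ᵐ y ∂μ.restrict B, ‖(σ x y)⁻¹‖ = 1 := ae_of_all _ fun y => by
    rw [norm_inv, hσ_unit, inv_one]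
  let f' := LpToLpRestrictCLM G ℂ ℂ μ p (x • B) f
  let g := Lp.unimodularSMulₗᵢ ℂ p hc_meas hc (Lp.compMeasurePreserving _ hmp f')
  have hg : g =ᵐ[μ.restrict B] fun y => (σ x y)⁻¹ * f (x * y) := by
    filter_upwards [Lp.coeFn_unimodularSMulₗᵢ hc_meas hc
      (Lp.compMeasurePreserving _ hmp f'), Lp.coeFn_compMeasurePreserving f' hmp,
      hmp.quasiMeasurePreserving.ae_eq_comp (LpToLpRestrictCLM_coeFn ℂ (x • B) f)]
      with y hy hy' hy''
    rw [hy, hy', smul_eq_mul, Function.comp_apply]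
    exact congrArg _ hy''
  have hσ_ne : ∀ a b, σ a b ≠ 0 := fun a b =>
    norm_ne_zero_iff.1 ((hσ_unit a b).symm ▸ one_ne_zero)
  refine ⟨g, (twistedTranslate_ae_eq hσ_meas hσ_unit hB x hg).trans (ae_of_all _ fun z => ?_)⟩
  simp only [mul_inv_cancel_left, mul_inv_cancel_left₀ (hσ_ne _ _)]

theorem twistedTranslate_apply_mul_ae (x : G) (g : Lp ℂ p (μ.restrict B)) :
    ∀ᵐ y ∂μ.restrict B, twistedTranslate σ hσ_meas hσ_unit hB x g (x * y) = σ x y * g y := by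
  have hV := twistedTranslate_ae_eq hσ_meas hσ_unit hB x (g := g) (ae_eq_refl _)
  filter_upwards [ae_restrict_of_ae
    ((measurePreserving_mul_left μ x).quasiMeasurePreserving.ae_eq_comp hV), ae_restrict_mem hB]
    with y hy hyB
  rw [Function.comp_apply, Function.comp_apply] at hy
  have hxy : x * y ∈ x • B := Set.smul_mem_smul_set hyB
  rw [hy, Set.indicator_of_mem hxy, inv_mul_cancel_left]

theorem apply_twistedTranslate_eq_smul
    (hσ_cocycle : ∀ x y z, σ x y * σ (x * y) z = σ x (y * z) * σ y z) {x y : G}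
    (L : Lp ℂ p μ →L[ℂ] Lp ℂ p μ)
    (hL : ∀ f : Lp ℂ p μ, L f =ᵐ[μ] fun z => σ x (x⁻¹ * z) * f (x⁻¹ * z))
    (g : Lp ℂ p (μ.restrict B)) :
    L (twistedTranslate σ hσ_meas hσ_unit hB y g) =
      σ x y • twistedTranslate σ hσ_meas hσ_unit hB (x * y) g := by
  refine Lp.ext ?_
  have hVy := twistedTranslate_ae_eq hσ_meas hσ_unit hB y (g := g) (ae_eq_refl _)
  filter_upwards [hL _, (measurePreserving_mul_left μ x⁻¹).quasiMeasurePreserving.ae_eq_comp hVy,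
    Lp.coeFn_smul (σ x y) (twistedTranslate σ hσ_meas hσ_unit hB (x * y) g),
    twistedTranslate_ae_eq hσ_meas hσ_unit hB (x * y) (g := g) (ae_eq_refl _)] with z hL hy hs hxy
  rw [Function.comp_apply, Function.comp_apply] at hy
  rw [hL, hy, hs, Pi.smul_apply, hxy, smul_eq_mul]
  have hmem : x⁻¹ * z ∈ y • B ↔ z ∈ (x * y) • B := by
    simp only [Set.mem_smul_set_iff_inv_smul_mem, smul_eq_mul, mul_inv_rev, mul_assoc]
  by_cases hz : z ∈ (x * y) • B
  · rw [Set.indicator_of_mem (hmem.2 hz), Set.indicator_of_mem hz, mul_inv_rev, mul_assoc]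
    have hc := hσ_cocycle x y (y⁻¹ * (x⁻¹ * z))
    rw [mul_inv_cancel_left] at hc
    linear_combination g (y⁻¹ * (x⁻¹ * z)) * hc.symm
  · rw [Set.indicator_of_notMem (mt hmem.1 hz), Set.indicator_of_notMem hz, mul_zero, mul_zero]

end TwistedTranslate

theorem twisted_regular_module_unitary_general {G : Type*} [Group G] [TopologicalSpace G]
    [IsTopologicalGroup G] [SecondCountableTopology G]
    [MeasurableSpace G] [BorelSpace G]
    (μ : Measure G) [μ.IsHaarMeasure]
    (σ : G → G → ℂ)
    (hσ_unit : ∀ x y, ‖σ x y‖ = 1)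
    (hσ_meas : Measurable fun p : G × G => σ p.1 p.2)
    (hσ_cocycle : ∀ x y z, σ x y * σ (x * y) z = σ x (y * z) * σ y z)
    -- Γ is a discrete subgroup with Borel fundamental domain B
    (Γ : Subgroup G) [DiscreteTopology Γ]
    (B : Set G) (hBmeas : MeasurableSet B)
    (hB : ∀ x : G, ∃! γ : Γ, (γ : G)⁻¹ * x ∈ B)
    -- the σ-projective left regular representation of G on L²(G)
    (lamG : G → (Lp ℂ 2 μ →L[ℂ] Lp ℂ 2 μ))
    (hlamG : ∀ (x : G) (f : Lp ℂ 2 μ),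
      (lamG x f : G → ℂ) =ᵐ[μ] fun y => σ x (x⁻¹ * y) * f (x⁻¹ * y))
    -- λ_σ^Γ(γ) ⊗ I on the square-summable L²(B)-valued families over Γ
    (lamΓ : Γ → (lp (fun _ : Γ => Lp ℂ 2 (μ.restrict B)) 2 →L[ℂ]
        lp (fun _ : Γ => Lp ℂ 2 (μ.restrict B)) 2))
    (hlamΓ : ∀ (γ : Γ) (F : lp (fun _ : Γ => Lp ℂ 2 (μ.restrict B)) 2) (γ' : Γ),
      (lamΓ γ F) γ' = σ (γ : G) ((γ⁻¹ * γ' : Γ) : G) • F (γ⁻¹ * γ')) :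
    ∃ U : lp (fun _ : Γ => Lp ℂ 2 (μ.restrict B)) 2 ≃ₗᵢ[ℂ] Lp ℂ 2 μ,
      -- U is determined by U(f ⊗ g)(γ y) = σ(γ, y) f(γ) g(y):
      (∀ (F : lp (fun _ : Γ => Lp ℂ 2 (μ.restrict B)) 2) (γ : Γ),
          ∀ᵐ y ∂(μ.restrict B), (U F : G → ℂ) ((γ : G) * y) = σ (γ : G) y * (F γ : G → ℂ) y) ∧
      -- U intertwines λ_σ^Γ(γ) ⊗ I with λ_σ^G(γ):
      (∀ (γ : Γ) (F : lp (fun _ : Γ => Lp ℂ 2 (μ.restrict B)) 2),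
          U (lamΓ γ F) = lamG (γ : G) (U F)) := by
  have : Countable Γ := TopologicalSpace.separableSpace_iff_countable.mp inferInstance
  let V : ∀ γ : Γ, Lp ℂ 2 (μ.restrict B) →ₗᵢ[ℂ] Lp ℂ 2 μ :=
    fun γ => twistedTranslate σ hσ_meas hσ_unit hBmeas γ
  have hdisj : Pairwise (Disjoint on fun γ : Γ => (γ : G) • B) := fun γ δ hγδ =>
    Set.disjoint_left.2 fun x hxγ hxδ => hγδ <| (hB x).unique
      (Set.mem_smul_set_iff_inv_smul_mem.1 hxγ) (Set.mem_smul_set_iff_inv_smul_mem.1 hxδ)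
  have hcover : ∀ x, ∃ γ : Γ, x ∈ (γ : G) • B := fun x =>
    (hB x).exists.imp fun _ => Set.mem_smul_set_iff_inv_smul_mem.2
  have hsupp : ∀ γ g, V γ g =ᵐ[μ] ((γ : G) • B).indicator (V γ g) :=
    fun γ => twistedTranslate_ae_eq_indicator_self hσ_meas hσ_unit hBmeas γ
  have hsum : IsHilbertSum ℂ _ V := isHilbertSum_of_ae_eq_indicator hdisj hcover hsupp
    fun γ => exists_twistedTranslate_ae_eq_indicator hσ_meas hσ_unit hBmeas γ
  refine ⟨hsum.linearIsometryEquiv.symm, fun F γ => ?_, fun γ F => ?_⟩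
  · have hloc := hsum.linearIsometryEquiv_symm_ae_eq_restrict
      (fun γ => hBmeas.const_smul (γ : G)) hdisj hsupp F γ
    filter_upwards [(measurePreserving_mul_left_restrict hBmeas γ).quasiMeasurePreserving.ae_eq_comp
        hloc, twistedTranslate_apply_mul_ae hσ_meas hσ_unit hBmeas γ (F γ)] with y hUF hVF
    exact hUF.trans hVF
  · rw [hsum.linearIsometryEquiv_symm_apply, hsum.linearIsometryEquiv_symm_apply,
      (lamG γ).map_tsum (hsum.OrthogonalFamily.summable_of_lp F), ← (Equiv.mulLeft γ).tsum_eq]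
    refine tsum_congr fun δ => ?_
    rw [Equiv.coe_mulLeft, hlamΓ, inv_mul_cancel_left, LinearIsometry.map_smul,
      apply_twistedTranslate_eq_smul hσ_meas hσ_unit hBmeas hσ_cocycle (lamG γ) (hlamG γ)]
    rfl

/-- for a discrete subgroup `Γ` of a second countable unimodular locally
compact group `G` with Borel fundamental domain `B`, the map `U` determined by
`U(f ⊗ g)(γy) = σ(γ,y) f(γ) g(y)` is a unitary from `ℓ²(Γ) ⊗ L²(B)` (realized as the
Hilbert space of square-summable `L²(B)`-valued families over `Γ`) onto `L²(G)`,
intertwining `λ_σ^Γ(γ) ⊗ I` with `λ_σ^G(γ)`. -/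
theorem twisted_regular_module_unitary {G : Type*} [Group G] [TopologicalSpace G]
    [IsTopologicalGroup G] [LocallyCompactSpace G] [SecondCountableTopology G]
    [MeasurableSpace G] [BorelSpace G]
    (μ : Measure G) [μ.IsHaarMeasure] [μ.IsMulRightInvariant]
    (σ : G → G → ℂ)
    (hσ_unit : ∀ x y, ‖σ x y‖ = 1)
    (hσ_meas : Measurable fun p : G × G => σ p.1 p.2)
    (hσ_cocycle : ∀ x y z, σ x y * σ (x * y) z = σ x (y * z) * σ y z)
    (hσ_one : σ 1 1 = 1)
    -- Γ is a discrete subgroup with Borel fundamental domain B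
    (Γ : Subgroup G) [DiscreteTopology Γ]
    (B : Set G) (hBmeas : MeasurableSet B)
    (hB : ∀ x : G, ∃! γ : Γ, (γ : G)⁻¹ * x ∈ B)
    -- the σ-projective left regular representation of G on L²(G)
    (lamG : G → (Lp ℂ 2 μ →L[ℂ] Lp ℂ 2 μ))
    (hlamG : ∀ (x : G) (f : Lp ℂ 2 μ),
      (lamG x f : G → ℂ) =ᵐ[μ] fun y => σ x (x⁻¹ * y) * f (x⁻¹ * y))
    -- λ_σ^Γ(γ) ⊗ I on the square-summable L²(B)-valued families over Γ
    (lamΓ : Γ → (lp (fun _ : Γ => Lp ℂ 2 (μ.restrict B)) 2 →L[ℂ]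
        lp (fun _ : Γ => Lp ℂ 2 (μ.restrict B)) 2))
    (hlamΓ : ∀ (γ : Γ) (F : lp (fun _ : Γ => Lp ℂ 2 (μ.restrict B)) 2) (γ' : Γ),
      (lamΓ γ F) γ' = σ (γ : G) ((γ⁻¹ * γ' : Γ) : G) • F (γ⁻¹ * γ')) :
    ∃ U : lp (fun _ : Γ => Lp ℂ 2 (μ.restrict B)) 2 ≃ₗᵢ[ℂ] Lp ℂ 2 μ,
      -- U is determined by U(f ⊗ g)(γ y) = σ(γ, y) f(γ) g(y):
      (∀ (F : lp (fun _ : Γ => Lp ℂ 2 (μ.restrict B)) 2) (γ : Γ),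
          ∀ᵐ y ∂(μ.restrict B), (U F : G → ℂ) ((γ : G) * y) = σ (γ : G) y * (F γ : G → ℂ) y) ∧
      -- U intertwines λ_σ^Γ(γ) ⊗ I with λ_σ^G(γ):
      (∀ (γ : Γ) (F : lp (fun _ : Γ => Lp ℂ 2 (μ.restrict B)) 2),
          U (lamΓ γ F) = lamG (γ : G) (U F)) :=
  twisted_regular_module_unitary_general μ σ hσ_unit hσ_meas hσ_cocycle Γ B hBmeas hB lamG hlamG
    lamΓ hlamΓ
end

section
/- Let G be a second countable, unimodular, locally compact group with Haar measure, σ a 2-cocycle on G, Γ a lattice in G with Borel fundamental domain B of finite measure, and π a σ-projective irreducible square-integrable unitary representation of G on H with formal dimension d_π. Fix a unit vector η ∈ H, let p̃ be the orthogonal projection of L²(G) onto the (closed) range of the wavelet transform V_η, let (e_i)_i be an orthonormal basis of L²(B), and let ẽ_i be the zero-extension of e_i to G. Then Σ_i ‖p̃ ẽ_i‖² = d_π · vol(G/Γ), where vol(G/Γ) is the Haar measure of B. -/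
/-!
Since `⟪V ξ, V ζ⟫ = d_π⁻¹ ⟪ξ, ζ⟫`, the projection onto the closed range of `V` is `d_π V V†`,
so `‖p̃ ẽᵢ‖² = d_π ‖V† ẽᵢ‖²`. Expanding `‖V† ẽᵢ‖²` in a Hilbert basis `(b_j)` of `H` and
exchanging the two sums of non-negative terms gives `∑_j ∑_i |⟪ẽᵢ, V b_j⟫|² = ∑_j ∫_B |V b_j|²`,
because `(eᵢ)` is a Hilbert basis of `L²(B)`. The basis `(b_j)` is countable, as `√d_π V` maps it
to an orthonormal family in the separable space `L²(G)`, so the last sum can be moved inside the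
integral, where Parseval's identity for `π(x) η` turns it into `∫_B ‖π(x) η‖² = μ(B)`.
-/

open MeasureTheory
open scoped ENNReal InnerProductSpace InnerProduct ComplexConjugate

theorem HilbertBasis.tsum_enorm_inner_sq {𝕜 E ι : Type*} [RCLike 𝕜] [NormedAddCommGroup E]
    [InnerProductSpace 𝕜 E] (b : HilbertBasis ι 𝕜 E) (x : E) :
    ∑' i, ‖⟪b i, x⟫_𝕜‖ₑ ^ 2 = ‖x‖ₑ ^ 2 := by
  have h := lp.hasSum_norm (p := 2) (by norm_num) (b.repr x)
  simp only [ENNReal.toReal_ofNat, Real.rpow_two, b.repr_apply_apply,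
    LinearIsometryEquiv.norm_map] at h
  simp only [← ofReal_norm, ← ENNReal.ofReal_pow (norm_nonneg _)]
  rw [← ENNReal.ofReal_tsum_of_nonneg (fun _ => by positivity) h.summable, h.tsum_eq]

theorem HilbertBasis.tsum_enorm_adjoint_sq {𝕜 E F J ι : Type*} [RCLike 𝕜]
    [NormedAddCommGroup E] [InnerProductSpace 𝕜 E] [CompleteSpace E]
    [NormedAddCommGroup F] [InnerProductSpace 𝕜 F] [CompleteSpace F]
    (b : HilbertBasis J 𝕜 E) (T : E →L[𝕜] F) (u : ι → F) :
    ∑' i, ‖(T†) (u i)‖ₑ ^ 2 = ∑' j, ∑' i, ‖⟪u i, T (b j)⟫_𝕜‖ₑ ^ 2 := by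
  simp_rw [← b.tsum_enorm_inner_sq, ContinuousLinearMap.adjoint_inner_right,
    ← inner_conj_symm (T _), RCLike.enorm_conj]
  exact ENNReal.tsum_comm

theorem Orthonormal.countable {𝕜 E ι : Type*} [RCLike 𝕜] [NormedAddCommGroup E]
    [InnerProductSpace 𝕜 E] [TopologicalSpace.SeparableSpace E] {v : ι → E}
    (hv : Orthonormal 𝕜 v) : Countable ι := by
  refine Pairwise.countable_of_isOpen_disjoint (s := fun i => Metric.ball (v i) (1 / 2))
    (fun i j hij => Metric.ball_disjoint_ball ?_) (fun _ => Metric.isOpen_ball)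
    (fun i => ⟨v i, Metric.mem_ball_self (by norm_num)⟩)
  have h : ‖v i - v j‖ ^ 2 = 2 := by
    rw [@norm_sub_sq 𝕜, hv.norm_eq_one, hv.norm_eq_one, hv.inner_eq_zero hij]
    norm_num
  rw [dist_eq_norm]
  nlinarith [norm_nonneg (v i - v j)]

section ScaledIsometry

open ContinuousLinearMap

variable {𝕜 E F : Type*} [RCLike 𝕜] [NormedAddCommGroup E] [InnerProductSpace 𝕜 E]
  [NormedAddCommGroup F] [InnerProductSpace 𝕜 F] {V : E →L[𝕜] F} {c : ℝ}

theorem norm_map_sq_of_inner_map_map (hV : ∀ ξ ζ, ⟪V ξ, V ζ⟫_𝕜 = (c : 𝕜)⁻¹ * ⟪ξ, ζ⟫_𝕜)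
    (ξ : E) : ‖V ξ‖ ^ 2 = c⁻¹ * ‖ξ‖ ^ 2 := by
  rw [@norm_sq_eq_re_inner 𝕜, hV, @norm_sq_eq_re_inner 𝕜, ← RCLike.ofReal_inv,
    RCLike.re_ofReal_mul]

theorem enorm_smul_map_sq_of_inner_map_map (hc : 0 < c)
    (hV : ∀ ξ ζ, ⟪V ξ, V ζ⟫_𝕜 = (c : 𝕜)⁻¹ * ⟪ξ, ζ⟫_𝕜) (ξ : E) :
    ‖(c : 𝕜) • V ξ‖ₑ ^ 2 = ENNReal.ofReal c * ‖ξ‖ₑ ^ 2 := by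
  rw [← ofReal_norm, ← ofReal_norm, ← ENNReal.ofReal_pow (norm_nonneg _),
    ← ENNReal.ofReal_pow (norm_nonneg _), ← ENNReal.ofReal_mul hc.le, norm_smul, mul_pow,
    norm_map_sq_of_inner_map_map hV, RCLike.norm_ofReal, sq_abs]
  congr 1
  field_simp

theorem Orthonormal.smul_comp_of_inner_map_map {J : Type*} {b : J → E} (hb : Orthonormal 𝕜 b)
    (hc : 0 < c) (hV : ∀ ξ ζ, ⟪V ξ, V ζ⟫_𝕜 = (c : 𝕜)⁻¹ * ⟪ξ, ζ⟫_𝕜) :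
    Orthonormal 𝕜 fun j => (√c : 𝕜) • V (b j) := by
  classical
  rw [orthonormal_iff_ite] at hb ⊢
  intro i j
  rw [inner_smul_left, inner_smul_right, hV, hb, RCLike.conj_ofReal, ← mul_assoc, ← mul_assoc,
    ← RCLike.ofReal_mul, Real.mul_self_sqrt hc.le, ← RCLike.ofReal_inv, ← RCLike.ofReal_mul,
    mul_inv_cancel₀ hc.ne', RCLike.ofReal_one, one_mul]

variable [CompleteSpace E] [CompleteSpace F]

theorem adjoint_apply_map_of_inner_map_map
    (hV : ∀ ξ ζ, ⟪V ξ, V ζ⟫_𝕜 = (c : 𝕜)⁻¹ * ⟪ξ, ζ⟫_𝕜) (ξ : E) :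
    (V†) (V ξ) = (c : 𝕜)⁻¹ • ξ := by
  refine ext_inner_right 𝕜 fun ζ => ?_
  rw [adjoint_inner_left, hV, inner_smul_left, map_inv₀, RCLike.conj_ofReal]

theorem starProjection_closure_range_of_inner_map_map (hc : c ≠ 0)
    (hV : ∀ ξ ζ, ⟪V ξ, V ζ⟫_𝕜 = (c : 𝕜)⁻¹ * ⟪ξ, ζ⟫_𝕜) (f : F) :
    (LinearMap.range (V : E →ₗ[𝕜] F)).topologicalClosure.starProjection f
      = (c : 𝕜) • V ((V†) f) := by
  refine Submodule.eq_starProjection_of_mem_orthogonal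
    (Submodule.smul_mem _ _ (Submodule.le_topologicalClosure _ ⟨_, rfl⟩)) ?_
  rw [Submodule.orthogonal_closure, orthogonal_range, LinearMap.mem_ker,
    ContinuousLinearMap.coe_coe, map_sub, map_smul, adjoint_apply_map_of_inner_map_map hV,
    smul_smul, mul_inv_cancel₀ (RCLike.ofReal_ne_zero.2 hc), one_smul, sub_self]

end ScaledIsometry

namespace MeasureTheory

variable {α 𝕜 : Type*} [RCLike 𝕜] {m : MeasurableSpace α} {μ : Measure α}

theorem Lp.enorm_sq_eq_lintegral {E : Type*} [NormedAddCommGroup E] (f : Lp E 2 μ) :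
    ‖f‖ₑ ^ 2 = ∫⁻ x, ‖f x‖ₑ ^ 2 ∂μ := by
  have h := eLpNorm_nnreal_pow_eq_lintegral (μ := μ) (f := f) (p := 2) two_ne_zero
  simp only [NNReal.coe_ofNat, ENNReal.rpow_two, ENNReal.coe_ofNat] at h
  rw [Lp.enorm_def, h]

theorem L2.inner_map_map_eq_integral {H : Type*} [NormedAddCommGroup H]
    [InnerProductSpace 𝕜 H] {Φ : α → H} {V : H →L[𝕜] Lp 𝕜 2 μ}
    (hV : ∀ ξ, (V ξ : α → 𝕜) =ᵐ[μ] fun x => ⟪Φ x, ξ⟫_𝕜) (ξ ζ : H) :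
    ⟪V ξ, V ζ⟫_𝕜 = ∫ x, ⟪Φ x, ζ⟫_𝕜 * conj ⟪Φ x, ξ⟫_𝕜 ∂μ := by
  rw [L2.inner_def]
  refine integral_congr_ae ?_
  filter_upwards [hV ξ, hV ζ] with x hξ hζ
  rw [RCLike.inner_apply, hξ, hζ]

theorem L2.inner_eq_inner_restrict_of_ae_eq_indicator {s : Set α} (hs : MeasurableSet s)
    {e : Lp 𝕜 2 (μ.restrict s)} {u : Lp 𝕜 2 μ} (hu : u =ᵐ[μ] s.indicator e) (f : Lp 𝕜 2 μ) :
    ⟪u, f⟫_𝕜 = ⟪e, LpToLpRestrictCLM α 𝕜 𝕜 μ 2 s f⟫_𝕜 := by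
  have hind : (fun x => ⟪u x, f x⟫_𝕜) =ᵐ[μ] s.indicator fun x => ⟪e x, f x⟫_𝕜 := by
    filter_upwards [hu] with x hx
    by_cases h : x ∈ s <;> simp [hx, h]
  rw [L2.inner_def, L2.inner_def, integral_congr_ae hind, integral_indicator hs]
  refine integral_congr_ae ?_
  filter_upwards [LpToLpRestrictCLM_coeFn 𝕜 s f] with x hx
  rw [hx]

theorem tsum_enorm_inner_sq_eq_setLIntegral {ι : Type*} {s : Set α} (hs : MeasurableSet s)
    (e : HilbertBasis ι 𝕜 (Lp 𝕜 2 (μ.restrict s))) {u : ι → Lp 𝕜 2 μ}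
    (hu : ∀ i, u i =ᵐ[μ] s.indicator (e i)) (f : Lp 𝕜 2 μ) :
    ∑' i, ‖⟪u i, f⟫_𝕜‖ₑ ^ 2 = ∫⁻ x in s, ‖f x‖ₑ ^ 2 ∂μ := by
  simp_rw [L2.inner_eq_inner_restrict_of_ae_eq_indicator hs (hu _), e.tsum_enorm_inner_sq,
    Lp.enorm_sq_eq_lintegral]
  refine lintegral_congr_ae ?_
  filter_upwards [LpToLpRestrictCLM_coeFn 𝕜 s f] with x hx
  rw [hx]

theorem tsum_lintegral_enorm_inner_sq {E J : Type*} [NormedAddCommGroup E]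
    [InnerProductSpace 𝕜 E] [Countable J] (b : HilbertBasis J 𝕜 E) {Φ : α → E}
    {f : J → α → 𝕜} (hf_meas : ∀ j, AEMeasurable (f j) μ)
    (hf : ∀ j, f j =ᵐ[μ] fun x => ⟪Φ x, b j⟫_𝕜) :
    ∑' j, ∫⁻ x, ‖f j x‖ₑ ^ 2 ∂μ = ∫⁻ x, ‖Φ x‖ₑ ^ 2 ∂μ := by
  rw [← lintegral_tsum fun j => (hf_meas j).enorm.pow_const 2]
  refine lintegral_congr_ae ?_
  filter_upwards [ae_all_iff.2 hf] with x hx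
  rw [← b.tsum_enorm_inner_sq (Φ x)]
  refine tsum_congr fun j => ?_
  rw [hx, ← inner_conj_symm, RCLike.enorm_conj]

theorem tsum_enorm_adjoint_sq_eq_setLIntegral {ι H J : Type*} [NormedAddCommGroup H]
    [InnerProductSpace 𝕜 H] [CompleteSpace H] [Countable J] (b : HilbertBasis J 𝕜 H)
    {s : Set α} (hs : MeasurableSet s) (e : HilbertBasis ι 𝕜 (Lp 𝕜 2 (μ.restrict s)))
    {u : ι → Lp 𝕜 2 μ} (hu : ∀ i, u i =ᵐ[μ] s.indicator (e i)) {Φ : α → H}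
    {V : H →L[𝕜] Lp 𝕜 2 μ} (hV : ∀ ξ, (V ξ : α → 𝕜) =ᵐ[μ] fun x => ⟪Φ x, ξ⟫_𝕜) :
    ∑' i, ‖(V†) (u i)‖ₑ ^ 2 = ∫⁻ x in s, ‖Φ x‖ₑ ^ 2 ∂μ := by
  rw [b.tsum_enorm_adjoint_sq]
  simp_rw [tsum_enorm_inner_sq_eq_setLIntegral hs e hu]
  exact tsum_lintegral_enorm_inner_sq b
    (fun j => (Lp.aestronglyMeasurable (V (b j))).restrict.aemeasurable)
    (fun j => ae_restrict_of_ae (hV (b j)))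

end MeasureTheory

theorem sum_sq_norm_wavelet_projection_general {G : Type*} [Group G]
    [TopologicalSpace G] [LocallyCompactSpace G]
    [SecondCountableTopology G] [MeasurableSpace G] [BorelSpace G]
    (μ : Measure G) [μ.IsHaarMeasure]
    -- Γ is a lattice with Borel fundamental domain B of finite measure
    (B : Set G) (hBmeas : MeasurableSet B)
    -- π is a σ-projective irreducible square-integrable unitary representation on H
    {H : Type*} [NormedAddCommGroup H] [InnerProductSpace ℂ H] [CompleteSpace H]
    (π : G → (H →L[ℂ] H))
    (hπ_unitary : ∀ (x : G) (ξ ζ : H), ⟪π x ξ, π x ζ⟫_ℂ = ⟪ξ, ζ⟫_ℂ)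
    (dπ : ℝ) (hdπ : 0 < dπ)
    (hortho : ∀ ξ ξ' ζ ζ' : H,
      ∫ x, ⟪π x ζ, ξ⟫_ℂ * conj ⟪π x ζ', ξ'⟫_ℂ ∂μ
        = (dπ : ℂ)⁻¹ * ⟪ξ', ξ⟫_ℂ * conj ⟪ζ', ζ⟫_ℂ)
    -- the wavelet transform V = V_η with respect to a unit vector η
    (η : H) (hη : ‖η‖ = 1)
    (V : H →L[ℂ] Lp ℂ 2 μ)
    (hV : ∀ ξ : H, (V ξ : G → ℂ) =ᵐ[μ] fun x => ⟪π x η, ξ⟫_ℂ)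
    -- an orthonormal basis (e_i) of L²(B) and its zero-extensions ẽ_i
    {ι : Type*} (e : HilbertBasis ι ℂ (Lp ℂ 2 (μ.restrict B)))
    (te : ι → Lp ℂ 2 μ)
    (hte : ∀ i : ι, (te i : G → ℂ) =ᵐ[μ] B.indicator (e i : G → ℂ))
    -- p̃ is the orthogonal projection of L²(G) onto the closure of the range of V
    (p : Lp ℂ 2 μ →L[ℂ] Lp ℂ 2 μ)
    (hp_mem : ∀ f : Lp ℂ 2 μ,
      p f ∈ (LinearMap.range (V : H →ₗ[ℂ] Lp ℂ 2 μ)).topologicalClosure)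
    (hp_orth : ∀ f g : Lp ℂ 2 μ,
      g ∈ (LinearMap.range (V : H →ₗ[ℂ] Lp ℂ 2 μ)).topologicalClosure →
        ⟪f - p f, g⟫_ℂ = 0) :
    ∑' i : ι, ‖p (te i)‖ ^ 2 = dπ * (μ B).toReal := by
  have hVV : ∀ ξ ζ, ⟪V ξ, V ζ⟫_ℂ = (dπ : ℂ)⁻¹ * ⟪ξ, ζ⟫_ℂ := fun ξ ζ => by
    rw [L2.inner_map_map_eq_integral hV, hortho, inner_self_eq_norm_sq_to_K, hη]
    simp
  have hp : ∀ f, p f = (dπ : ℂ) • V ((V†) f) := fun f =>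
    (Submodule.eq_starProjection_of_mem_of_inner_eq_zero (hp_mem f) (hp_orth f)).symm.trans
      (starProjection_closure_range_of_inner_map_map hdπ.ne' hVV f)
  have hπη : ∀ x, ‖π x η‖ₑ = 1 := fun x => by
    rw [← ofReal_norm, @norm_eq_sqrt_re_inner ℂ, hπ_unitary, ← @norm_eq_sqrt_re_inner ℂ, hη,
      ENNReal.ofReal_one]
  obtain ⟨J, b, -⟩ := exists_hilbertBasis ℂ H
  -- required by the instance making `Lp ℂ 2 μ` separable
  have : Fact ((2 : ℝ≥0∞) ≠ ∞) := ⟨ENNReal.ofNat_ne_top⟩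
  have : Countable J := (b.orthonormal.smul_comp_of_inner_map_map hdπ hVV).countable
  have key : ∑' i, ‖p (te i)‖ₑ ^ 2 = ENNReal.ofReal dπ * μ B := calc
    ∑' i, ‖p (te i)‖ₑ ^ 2 = ENNReal.ofReal dπ * ∑' i, ‖(V†) (te i)‖ₑ ^ 2 := by
      rw [← ENNReal.tsum_mul_left]
      exact tsum_congr fun i => (hp _).symm ▸ enorm_smul_map_sq_of_inner_map_map hdπ hVV _
    _ = ENNReal.ofReal dπ * ∫⁻ x in B, ‖π x η‖ₑ ^ 2 ∂μ := by
      rw [tsum_enorm_adjoint_sq_eq_setLIntegral b hBmeas e hte hV]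
    _ = ENNReal.ofReal dπ * μ B := by simp [hπη]
  rw [← ENNReal.toReal_ofReal hdπ.le, ← ENNReal.toReal_mul, ← key,
    ENNReal.tsum_toReal_eq fun _ => by finiteness]
  simp [toReal_enorm]

/-- in the setting of a lattice `Γ` in `G` with fundamental domain `B` of
finite measure and a `σ`-projective irreducible square-integrable representation `π` with
formal dimension `d_π`, the projection `p̃` onto the closed range of the wavelet transform
`V_η` satisfies `∑_i ‖p̃ ẽ_i‖² = d_π ⬝ vol(G/Γ)`, where `vol(G/Γ) = μ(B)` and `ẽ_i` are
the zero-extensions of an orthonormal basis of `L²(B)`. -/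
theorem sum_sq_norm_wavelet_projection {G : Type*} [Group G]
    [TopologicalSpace G] [IsTopologicalGroup G] [LocallyCompactSpace G]
    [SecondCountableTopology G] [MeasurableSpace G] [BorelSpace G]
    (μ : Measure G) [μ.IsHaarMeasure] [μ.IsMulRightInvariant]
    (σ : G → G → ℂ)
    (hσ_unit : ∀ x y, ‖σ x y‖ = 1)
    (hσ_meas : Measurable fun p : G × G => σ p.1 p.2)
    (hσ_cocycle : ∀ x y z, σ x y * σ (x * y) z = σ x (y * z) * σ y z)
    (hσ_one : σ 1 1 = 1)
    -- Γ is a lattice with Borel fundamental domain B of finite measure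
    (Γ : Subgroup G) [DiscreteTopology Γ]
    (B : Set G) (hBmeas : MeasurableSet B)
    (hB : ∀ x : G, ∃! γ : Γ, (γ : G)⁻¹ * x ∈ B) (hBfin : μ B ≠ ∞)
    -- π is a σ-projective irreducible square-integrable unitary representation on H
    {H : Type*} [NormedAddCommGroup H] [InnerProductSpace ℂ H] [CompleteSpace H]
    (π : G → (H →L[ℂ] H))
    (hπ_mul : ∀ x y : G, (π x).comp (π y) = σ x y • π (x * y))
    (hπ_unitary : ∀ (x : G) (ξ ζ : H), ⟪π x ξ, π x ζ⟫_ℂ = ⟪ξ, ζ⟫_ℂ)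
    (hπ_cont : ∀ ξ : H, Continuous fun x : G => π x ξ)
    (dπ : ℝ) (hdπ : 0 < dπ)
    (hortho : ∀ ξ ξ' ζ ζ' : H,
      ∫ x, ⟪π x ζ, ξ⟫_ℂ * conj ⟪π x ζ', ξ'⟫_ℂ ∂μ
        = (dπ : ℂ)⁻¹ * ⟪ξ', ξ⟫_ℂ * conj ⟪ζ', ζ⟫_ℂ)
    -- the wavelet transform V = V_η with respect to a unit vector η
    (η : H) (hη : ‖η‖ = 1)
    (V : H →L[ℂ] Lp ℂ 2 μ)
    (hV : ∀ ξ : H, (V ξ : G → ℂ) =ᵐ[μ] fun x => ⟪π x η, ξ⟫_ℂ)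
    -- an orthonormal basis (e_i) of L²(B) and its zero-extensions ẽ_i
    {ι : Type*} (e : HilbertBasis ι ℂ (Lp ℂ 2 (μ.restrict B)))
    (te : ι → Lp ℂ 2 μ)
    (hte : ∀ i : ι, (te i : G → ℂ) =ᵐ[μ] B.indicator (e i : G → ℂ))
    -- p̃ is the orthogonal projection of L²(G) onto the closure of the range of V
    (p : Lp ℂ 2 μ →L[ℂ] Lp ℂ 2 μ)
    (hp_mem : ∀ f : Lp ℂ 2 μ,
      p f ∈ (LinearMap.range (V : H →ₗ[ℂ] Lp ℂ 2 μ)).topologicalClosure)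
    (hp_orth : ∀ f g : Lp ℂ 2 μ,
      g ∈ (LinearMap.range (V : H →ₗ[ℂ] Lp ℂ 2 μ)).topologicalClosure →
        ⟪f - p f, g⟫_ℂ = 0) :
    ∑' i : ι, ‖p (te i)‖ ^ 2 = dπ * (μ B).toReal :=
  sum_sq_norm_wavelet_projection_general μ B hBmeas π hπ_unitary dπ hdπ hortho η hη V hV e te hte p
    hp_mem hp_orth
end
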